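/- arXiv:1103.3638 — 3 statements merged into one kernel-verified Lean document; each statement's English description precedes it below -/
import Mathlib

section
/- If M ∈ 𝒞̄_f, Z ≤ M, Z' ∈ 𝒞̄_f has the same underlying set as Z, M' is obtained by replacing Z by Z', and the d-closure of the empty set in Z' is all of Z' (i.e., d_{Z'}(Z'') = 0 for all finite Z'' ⊆ Z'), then PG_Z(M) = PG(M'). -/
open Classical

/-- A relational structure for a language with relation symbols indexed by `I`,
where `R_i` has arity `ar i`, over a universe `U`.  The carrier may be infinite. -/
structure BigFS (I : Type) (ar : I → ℕ) (U : Type) where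
  carrier : Set U
  rels : Set ((i : I) × (Fin (ar i) → U))
  mem_carrier : ∀ r ∈ rels, ∀ k, r.2 k ∈ carrier

namespace BigFS

variable {I U : Type} {ar : I → ℕ}

/-- The relation instances of `M` all of whose entries lie in `S`
(the relations of the induced substructure on `S`). -/
def relsIn (M : BigFS I ar U) (S : Set U) : Set ((i : I) × (Fin (ar i) → U)) :=
  {r ∈ M.rels | ∀ k, r.2 k ∈ S}

/-- The predimension `δ(S) = |S| - Σ_i α_i |R_i^S|` of the induced substructure of `M`
on the finite set `S` (with weights `α`). -/
noncomputable def bdelta (α : I → ℕ) (M : BigFS I ar U) (S : Finset U) : ℤ :=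
  (S.card : ℤ) - ∑ᶠ r ∈ M.relsIn ↑S, (α r.1 : ℤ)

/-- `M ∈ 𝒞̄_f`: every finite substructure has finitely many relation instances and
nonnegative predimension. -/
def inCbar (α : I → ℕ) (M : BigFS I ar U) : Prop :=
  ∀ S : Finset U, ↑S ⊆ M.carrier → (M.relsIn ↑S).Finite ∧ 0 ≤ bdelta α M S

/-- The dimension `d_M(S) = min { δ(T) : S ⊆ T ⊆ M finite }`. -/
noncomputable def dim (α : I → ℕ) (M : BigFS I ar U) (S : Finset U) : ℤ :=
  sInf {z : ℤ | ∃ T : Finset U, S ⊆ T ∧ ↑T ⊆ M.carrier ∧ bdelta α M T = z}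

/-- A finite subset `S` is self-sufficient in `M`: `δ(S) ≤ δ(T)` for all finite
`S ⊆ T ⊆ M`. -/
def ssIn (α : I → ℕ) (M : BigFS I ar U) (S : Finset U) : Prop :=
  ↑S ⊆ M.carrier ∧ ∀ T : Finset U, S ⊆ T → ↑T ⊆ M.carrier → bdelta α M S ≤ bdelta α M T

/-- A (possibly infinite) subset `Z` is self-sufficient in `M`:
`δ(Z ∩ T) ≤ δ(T)` for every finite substructure `T` of `M`. -/
def ssSet (α : I → ℕ) (M : BigFS I ar U) (Z : Set U) : Prop :=
  Z ⊆ M.carrier ∧ ∀ T : Finset U, ↑T ⊆ M.carrier →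
    bdelta α M (T.filter (fun x => x ∈ Z)) ≤ bdelta α M T

/-- The induced substructure of `M` on the set `Z`. -/
def inducedBig (M : BigFS I ar U) (Z : Set U) : BigFS I ar U :=
  ⟨M.carrier ∩ Z, M.relsIn Z, fun r hr k => ⟨M.mem_carrier r hr.1 k, hr.2 k⟩⟩

/-- An embedding of `B` into `M` (as `L_f`-structures): injective on the carrier,
mapping into the carrier, preserving and reflecting all relations. -/
def IsEmb {V : Type} (B : BigFS I ar U) (M : BigFS I ar V) (g : U → V) : Prop :=
  Set.InjOn g B.carrier ∧ g '' B.carrier ⊆ M.carrier ∧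
  ∀ r : (i : I) × (Fin (ar i) → U), (∀ k, r.2 k ∈ B.carrier) →
    (r ∈ B.rels ↔ (⟨r.1, g ∘ r.2⟩ : (i : I) × (Fin (ar i) → V)) ∈ M.rels)

/-- `M` is a (countable) generic structure for `(𝒞_f, ≤)`: all finite substructures
lie in `𝒞_f` and `M` has the extension property: whenever `Z ≤ M`, `Z ≤ B ∈ 𝒞_f`
(with the same induced structure on `Z`), `B` embeds into `M` over `Z` with
self-sufficient image. -/
def IsGeneric (α : I → ℕ) (M : BigFS I ar U) : Prop :=
  M.carrier.Countable ∧ inCbar α M ∧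
  ∀ B : BigFS I ar U, B.carrier.Finite → inCbar α B →
  ∀ Z : Set U, Z ⊆ B.carrier → ssSet α B Z → ssSet α M Z →
    inducedBig B Z = inducedBig M Z →
    ∃ g : U → U, IsEmb B M g ∧ (∀ a ∈ Z, g a = a) ∧ ssSet α M (g '' B.carrier)

/-- The `d`-closure of a finite set `A` in `M`:
`{c ∈ M : d(A ∪ {c}) = d(A)}`. -/
noncomputable def cld (α : I → ℕ) (M : BigFS I ar U) (A : Finset U) : Set U :=
  {c | c ∈ M.carrier ∧ dim α M (insert c A) = dim α M A}

end BigFS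

open BigFS
section AuxLocalization

variable {I U : Type} {ar : I → ℕ}

noncomputable def wsum (α : I → ℕ) (s : Set ((i : I) × (Fin (ar i) → U))) : ℤ :=
  ∑ᶠ r ∈ s, (α r.1 : ℤ)

lemma wsum_eq_sum (α : I → ℕ) {s : Set ((i : I) × (Fin (ar i) → U))} (hs : s.Finite) :
    wsum α s = ∑ r ∈ hs.toFinset, (α r.1 : ℤ) :=
  finsum_mem_eq_finite_toFinset_sum _ hs

lemma wsum_mono (α : I → ℕ) {s t : Set ((i : I) × (Fin (ar i) → U))} (hst : s ⊆ t)
    (ht : t.Finite) : wsum α s ≤ wsum α t := by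
  rw [wsum_eq_sum α (ht.subset hst), wsum_eq_sum α ht]
  apply Finset.sum_le_sum_of_subset_of_nonneg
  · intro x hx
    simp only [Set.Finite.mem_toFinset] at *
    exact hst hx
  · intros; positivity

lemma wsum_union_inter (α : I → ℕ) {s t : Set ((i : I) × (Fin (ar i) → U))}
    (hs : s.Finite) (ht : t.Finite) :
    wsum α (s ∪ t) + wsum α (s ∩ t) = wsum α s + wsum α t :=
  finsum_mem_union_inter hs ht

lemma wsum_union (α : I → ℕ) {s t : Set ((i : I) × (Fin (ar i) → U))}
    (h : Disjoint s t) (hs : s.Finite) (ht : t.Finite) :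
    wsum α (s ∪ t) = wsum α s + wsum α t :=
  finsum_mem_union h hs ht

lemma wsum_diff (α : I → ℕ) {s t : Set ((i : I) × (Fin (ar i) → U))}
    (h : t ⊆ s) (hs : s.Finite) : wsum α (s \ t) = wsum α s - wsum α t := by
  have h1 : wsum α (t ∪ (s \ t)) = wsum α t + wsum α (s \ t) :=
    wsum_union α Set.disjoint_sdiff_right (hs.subset h) (hs.subset Set.diff_subset)
  rw [Set.union_diff_cancel h] at h1
  linarith

lemma bdelta_eq_wsum (α : I → ℕ) (M : BigFS I ar U) (S : Finset U) :
    bdelta α M S = (S.card : ℤ) - wsum α (M.relsIn ↑S) := rfl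

lemma relsIn_mono (M : BigFS I ar U) {s t : Set U} (h : s ⊆ t) :
    M.relsIn s ⊆ M.relsIn t := fun r hr => ⟨hr.1, fun k => h (hr.2 k)⟩

lemma relsIn_inter (M : BigFS I ar U) (s t : Set U) :
    M.relsIn (s ∩ t) = M.relsIn s ∩ M.relsIn t := by
  ext r
  simp only [relsIn, Set.mem_setOf_eq, Set.mem_inter_iff, Set.mem_sep_iff]
  constructor
  · rintro ⟨h1, h2⟩
    exact ⟨⟨h1, fun k => (h2 k).1⟩, ⟨h1, fun k => (h2 k).2⟩⟩
  · rintro ⟨⟨h1, h2⟩, ⟨_, h3⟩⟩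
    exact ⟨h1, fun k => ⟨h2 k, h3 k⟩⟩

/-- The coercion of `T.filter (· ∈ Z)` is `↑T ∩ Z`. -/
lemma coe_filterZ (Z : Set U) (T : Finset U) :
    (↑(T.filter (fun x => x ∈ Z)) : Set U) = ↑T ∩ Z := by
  ext x; simp [Finset.mem_filter]

section dimLemmas

variable (α : I → ℕ) (N : BigFS I ar U)

lemma dim_bddBelow {S : Finset U} (hN : inCbar α N) : BddBelow {z : ℤ | ∃ T : Finset U, S ⊆ T ∧ ↑T ⊆ N.carrier ∧ bdelta α N T = z} := by
  refine ⟨0, ?_⟩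
  rintro z ⟨T, _, hT, rfl⟩
  exact (hN T hT).2

lemma dim_le (hN : inCbar α N) {S T : Finset U} (hST : S ⊆ T) (hT : ↑T ⊆ N.carrier) :
    dim α N S ≤ bdelta α N T :=
  csInf_le (dim_bddBelow α N hN) ⟨T, hST, hT, rfl⟩

lemma dim_nonneg (hN : inCbar α N) {S : Finset U} (hS : ↑S ⊆ N.carrier) : 0 ≤ dim α N S := by
  refine le_csInf ⟨bdelta α N S, S, Finset.Subset.refl S, hS, rfl⟩ ?_
  rintro z ⟨T, _, hT, rfl⟩
  exact (hN T hT).2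

lemma dim_attain (hN : inCbar α N) {S : Finset U} (hS : ↑S ⊆ N.carrier) :
    ∃ T : Finset U, S ⊆ T ∧ ↑T ⊆ N.carrier ∧ bdelta α N T = dim α N S := by
  have hne : {z : ℤ | ∃ T : Finset U, S ⊆ T ∧ ↑T ⊆ N.carrier ∧ bdelta α N T = z}.Nonempty :=
    ⟨bdelta α N S, S, Finset.Subset.refl S, hS, rfl⟩
  exact Int.csInf_mem hne (dim_bddBelow α N hN)

lemma dim_mono (hN : inCbar α N) {S S' : Finset U} (h : S ⊆ S') (hS' : ↑S' ⊆ N.carrier) :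
    dim α N S ≤ dim α N S' := by
  obtain ⟨T, hT1, hT2, hT3⟩ := dim_attain α N hN hS'
  rw [← hT3]
  exact dim_le α N hN (h.trans hT1) hT2

end dimLemmas

section Msubmod

variable (α : I → ℕ) (M : BigFS I ar U)

lemma bdelta_submod (hM : inCbar α M) {T W : Finset U} (hT : ↑T ⊆ M.carrier) (hW : ↑W ⊆ M.carrier) :
    bdelta α M (T ∪ W) + bdelta α M (T ∩ W) ≤ bdelta α M T + bdelta α M W := by
  have hTW : (↑(T ∪ W) : Set U) ⊆ M.carrier := by
    rw [Finset.coe_union]; exact Set.union_subset hT hW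
  have hfT := (hM T hT).1
  have hfW := (hM W hW).1
  have hfTW := (hM (T ∪ W) hTW).1
  have hcard : ((T ∪ W).card : ℤ) + ((T ∩ W).card : ℤ) = (T.card : ℤ) + (W.card : ℤ) := by
    have := Finset.card_union_add_card_inter T W
    exact_mod_cast this
  have hrels : M.relsIn ↑(T ∩ W) = M.relsIn ↑T ∩ M.relsIn ↑W := by
    rw [Finset.coe_inter, relsIn_inter]
  have h1 : wsum α (M.relsIn ↑T ∪ M.relsIn ↑W) + wsum α (M.relsIn ↑T ∩ M.relsIn ↑W)
      = wsum α (M.relsIn ↑T) + wsum α (M.relsIn ↑W) := wsum_union_inter α hfT hfW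
  have h2 : wsum α (M.relsIn ↑T ∪ M.relsIn ↑W) ≤ wsum α (M.relsIn ↑(T ∪ W)) := by
    apply wsum_mono α _ hfTW
    apply Set.union_subset <;> apply relsIn_mono <;> simp [Finset.coe_union]
  simp only [bdelta_eq_wsum] at *
  rw [hrels]
  linarith

lemma dim_submod (hM : inCbar α M) {X Y : Finset U} (hX : ↑X ⊆ M.carrier) (hY : ↑Y ⊆ M.carrier) :
    dim α M (X ∪ Y) + dim α M (X ∩ Y) ≤ dim α M X + dim α M Y := by
  obtain ⟨TX, hTX1, hTX2, hTX3⟩ := dim_attain α M hM hX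
  obtain ⟨TY, hTY1, hTY2, hTY3⟩ := dim_attain α M hM hY
  have hTXY : (↑(TX ∪ TY) : Set U) ⊆ M.carrier := by
    rw [Finset.coe_union]; exact Set.union_subset hTX2 hTY2
  have h1 : dim α M (X ∪ Y) ≤ bdelta α M (TX ∪ TY) :=
    dim_le α M hM (Finset.union_subset_union hTX1 hTY1) hTXY
  have h2 : dim α M (X ∩ Y) ≤ bdelta α M (TX ∩ TY) :=
    dim_le α M hM (Finset.inter_subset_inter hTX1 hTY1)
      (by rw [Finset.coe_inter]; exact fun x hx => hTX2 hx.1)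
  have h3 := bdelta_submod α M hM hTX2 hTY2
  linarith

end Msubmod

end AuxLocalization
section ChangingAux

variable {I U : Type} {ar : I → ℕ}

lemma coe_sub_of_sub {S T : Finset U} {C : Set U} (h : S ⊆ T) (hT : ↑T ⊆ C) : ↑S ⊆ C :=
  (Finset.coe_subset.mpr h).trans hT

lemma coe_union_subset {S T : Finset U} {C : Set U} (hS : ↑S ⊆ C) (hT : ↑T ⊆ C) :
    ↑(S ∪ T) ⊆ C := by rw [Finset.coe_union]; exact Set.union_subset hS hT

lemma coe_insert_subset {c : U} {A : Finset U} {C : Set U} (hc : c ∈ C) (hA : ↑A ⊆ C) :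
    ↑(insert c A) ⊆ C := by rw [Finset.coe_insert]; exact Set.insert_subset hc hA

variable (α : I → ℕ) (M : BigFS I ar U) (Z : Set U) (Z' : BigFS I ar U) (M' : BigFS I ar U)

lemma relsIn_M' (hZ'c : Z'.carrier = Z)
    (hr : M'.rels = (M.rels \ M.relsIn Z) ∪ Z'.rels) (T : Finset U) :
    M'.relsIn ↑T =
      (M.relsIn ↑T \ M.relsIn ↑(T.filter (fun x => x ∈ Z))) ∪
        Z'.relsIn ↑(T.filter (fun x => x ∈ Z)) := by
  have hcf := coe_filterZ Z T
  ext r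
  simp only [relsIn, Set.mem_setOf_eq, Set.mem_union, Set.mem_diff, hr, hcf,
    Set.mem_inter_iff, Finset.mem_coe]
  constructor
  · rintro ⟨⟨hMr, hnZ⟩ | hZr, hT⟩
    · left
      refine ⟨⟨hMr, hT⟩, fun hb => hnZ ⟨hMr, fun k => (hb.2 k).2⟩⟩
    · right
      exact ⟨hZr, fun k => ⟨hT k, hZ'c ▸ Z'.mem_carrier r hZr k⟩⟩
  · rintro (⟨⟨hMr, hT⟩, hn⟩ | ⟨hZr, hk⟩)
    · refine ⟨Or.inl ⟨hMr, fun hrZ => hn ⟨hMr, fun k => ⟨hT k, hrZ.2 k⟩⟩⟩, hT⟩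
    · exact ⟨Or.inr hZr, fun k => (hk k).1⟩

lemma bdelta_M' (hM : inCbar α M) (hZ'c : Z'.carrier = Z) (hZ' : inCbar α Z')
    (hr : M'.rels = (M.rels \ M.relsIn Z) ∪ Z'.rels) {T : Finset U} (hT : ↑T ⊆ M.carrier) :
    bdelta α M' T = bdelta α M T - bdelta α M (T.filter (fun x => x ∈ Z))
      + bdelta α Z' (T.filter (fun x => x ∈ Z)) := by
  set Tz := T.filter (fun x => x ∈ Z) with hTzdef
  have hTzZ : (↑Tz : Set U) ⊆ Z := by rw [hTzdef, coe_filterZ]; exact Set.inter_subset_right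
  have hTzZ' : (↑Tz : Set U) ⊆ Z'.carrier := by rw [hZ'c]; exact hTzZ
  have hTzT : (↑Tz : Set U) ⊆ ↑T := Finset.coe_subset.mpr (Finset.filter_subset _ _)
  have hfT : (M.relsIn ↑T).Finite := (hM T hT).1
  have hfTz : (M.relsIn ↑Tz).Finite := hfT.subset (relsIn_mono M hTzT)
  have hfZ : (Z'.relsIn ↑Tz).Finite := (hZ' Tz hTzZ').1
  have hsubTz : M.relsIn ↑Tz ⊆ M.relsIn ↑T := relsIn_mono M hTzT
  have hdisj : Disjoint (M.relsIn ↑T \ M.relsIn ↑Tz) (Z'.relsIn ↑Tz) := by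
    rw [Set.disjoint_left]
    rintro r ⟨⟨hMr, _⟩, hnr⟩ ⟨_, hk⟩
    exact hnr ⟨hMr, hk⟩
  have hws : wsum α (M'.relsIn ↑T)
      = wsum α (M.relsIn ↑T) - wsum α (M.relsIn ↑Tz) + wsum α (Z'.relsIn ↑Tz) := by
    rw [relsIn_M' M Z Z' M' hZ'c hr T, ← hTzdef,
      wsum_union α hdisj (hfT.subset Set.diff_subset) hfZ, wsum_diff α hsubTz hfT]
  have hcard : ((T.card : ℤ)) - ((Tz.card : ℤ)) + ((Tz.card : ℤ)) = (T.card : ℤ) := by ring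
  simp only [bdelta_eq_wsum, hws]
  ring

lemma bdelta_M'_nonneg (hM : inCbar α M) (hZ : ssSet α M Z) (hZ'c : Z'.carrier = Z)
    (hZ' : inCbar α Z') (hr : M'.rels = (M.rels \ M.relsIn Z) ∪ Z'.rels)
    {T : Finset U} (hT : ↑T ⊆ M.carrier) : 0 ≤ bdelta α M' T := by
  have h1 := hZ.2 T hT
  have hTzZ' : (↑(T.filter (fun x => x ∈ Z)) : Set U) ⊆ Z'.carrier := by
    rw [hZ'c, coe_filterZ]; exact Set.inter_subset_right
  have h2 := (hZ' _ hTzZ').2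
  rw [bdelta_M' α M Z Z' M' hM hZ'c hZ' hr hT]
  linarith

/-- The localized dimension `inf {d(S ∪ Z₀) - d(Z₀) : Z₀ ⊆ Z finite}`. -/
noncomputable def gdim (S : Finset U) : ℤ :=
  sInf {z : ℤ | ∃ Z₀ : Finset U, ↑Z₀ ⊆ Z ∧ dim α M (S ∪ Z₀) - dim α M Z₀ = z}

lemma gdim_nonempty (S : Finset U) :
    {z : ℤ | ∃ Z₀ : Finset U, ↑Z₀ ⊆ Z ∧ dim α M (S ∪ Z₀) - dim α M Z₀ = z}.Nonempty :=
  ⟨dim α M (S ∪ ∅) - dim α M ∅, ∅, by simp, rfl⟩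

lemma gdim_bddBelow (hM : inCbar α M) (hZC : Z ⊆ M.carrier) {S : Finset U}
    (hS : ↑S ⊆ M.carrier) :
    BddBelow {z : ℤ | ∃ Z₀ : Finset U, ↑Z₀ ⊆ Z ∧ dim α M (S ∪ Z₀) - dim α M Z₀ = z} := by
  refine ⟨0, ?_⟩
  rintro z ⟨Z₀, hZ₀, rfl⟩
  have hU : (↑(S ∪ Z₀) : Set U) ⊆ M.carrier := coe_union_subset hS (hZ₀.trans hZC)
  have := dim_mono α M hM Finset.subset_union_right hU
  linarith

lemma gdim_le (hM : inCbar α M) (hZC : Z ⊆ M.carrier) {S : Finset U} (hS : ↑S ⊆ M.carrier)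
    {Z₀ : Finset U} (hZ₀ : ↑Z₀ ⊆ Z) :
    gdim α M Z S ≤ dim α M (S ∪ Z₀) - dim α M Z₀ :=
  csInf_le (gdim_bddBelow α M Z hM hZC hS) ⟨Z₀, hZ₀, rfl⟩

lemma le_gdim {a : ℤ} {S : Finset U}
    (h : ∀ Z₀ : Finset U, ↑Z₀ ⊆ Z → a ≤ dim α M (S ∪ Z₀) - dim α M Z₀) :
    a ≤ gdim α M Z S := by
  refine le_csInf (gdim_nonempty α M Z S) ?_
  rintro z ⟨Z₀, hZ₀, rfl⟩
  exact h Z₀ hZ₀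

lemma gdim_attain (hM : inCbar α M) (hZC : Z ⊆ M.carrier) {S : Finset U}
    (hS : ↑S ⊆ M.carrier) :
    ∃ Z₀ : Finset U, ↑Z₀ ⊆ Z ∧ dim α M (S ∪ Z₀) - dim α M Z₀ = gdim α M Z S :=
  Int.csInf_mem (gdim_nonempty α M Z S) (gdim_bddBelow α M Z hM hZC hS)

end ChangingAux
section MainAux

variable {I U : Type} {ar : I → ℕ} (α : I → ℕ) (M : BigFS I ar U) (Z : Set U)
  (Z' : BigFS I ar U) (M' : BigFS I ar U)

lemma dim_M'_eq (hM : inCbar α M) (hZ : ssSet α M Z) (hZ'c : Z'.carrier = Z)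
    (hZ' : inCbar α Z') (hd0 : ∀ S : Finset U, ↑S ⊆ Z → dim α Z' S = 0)
    (hc : M'.carrier = M.carrier) (hr : M'.rels = (M.rels \ M.relsIn Z) ∪ Z'.rels)
    {S : Finset U} (hS : ↑S ⊆ M.carrier) :
    dim α M' S = gdim α M Z S := by
  have hZC : Z ⊆ M.carrier := hZ.1
  have hd'bdd : BddBelow {z : ℤ | ∃ T : Finset U, S ⊆ T ∧ ↑T ⊆ M'.carrier ∧ bdelta α M' T = z} := by
    refine ⟨0, ?_⟩
    rintro z ⟨T, _, hT, rfl⟩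
    exact bdelta_M'_nonneg α M Z Z' M' hM hZ hZ'c hZ' hr (hc ▸ hT)
  have hd'ne : {z : ℤ | ∃ T : Finset U, S ⊆ T ∧ ↑T ⊆ M'.carrier ∧ bdelta α M' T = z}.Nonempty :=
    ⟨bdelta α M' S, S, Finset.Subset.refl S, by rw [hc]; exact hS, rfl⟩
  apply le_antisymm
  · -- dim M' S ≤ gdim
    refine le_csInf (gdim_nonempty α M Z S) ?_
    rintro z ⟨Z₀, hZ₀, rfl⟩
    -- Lemma 1
    have hSZ₀ : (↑(S ∪ Z₀) : Set U) ⊆ M.carrier := coe_union_subset hS (hZ₀.trans hZC)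
    obtain ⟨T, hT1, hT2, hT3⟩ := dim_attain α M hM hSZ₀
    set Tz := T.filter (fun x => x ∈ Z) with hTzdef
    have hTzZ : (↑Tz : Set U) ⊆ Z := by rw [hTzdef, coe_filterZ]; exact Set.inter_subset_right
    have hTzZ' : (↑Tz : Set U) ⊆ Z'.carrier := by rw [hZ'c]; exact hTzZ
    obtain ⟨W, hW1, hW2, hW3⟩ := dim_attain α Z' hZ' hTzZ'
    rw [hd0 Tz hTzZ] at hW3
    have hWZ : (↑W : Set U) ⊆ Z := hZ'c ▸ hW2
    have hWc : (↑W : Set U) ⊆ M.carrier := hWZ.trans hZC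
    have hT'c : (↑(T ∪ W) : Set U) ⊆ M.carrier := coe_union_subset hT2 hWc
    -- (T ∪ W).filter (· ∈ Z) = W
    have hfil : (T ∪ W).filter (fun x => x ∈ Z) = W := by
      ext x
      simp only [Finset.mem_filter, Finset.mem_union]
      constructor
      · rintro ⟨hx1 | hx2, hxZ⟩
        · exact hW1 (by simp [hTzdef, Finset.mem_filter, hx1, hxZ])
        · exact hx2
      · intro hx
        exact ⟨Or.inr hx, hWZ hx⟩
    have hTW : T ∩ W = Tz := by
      ext x
      simp only [Finset.mem_inter, hTzdef, Finset.mem_filter]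
      constructor
      · rintro ⟨hx1, hx2⟩
        exact ⟨hx1, hWZ hx2⟩
      · rintro ⟨hx1, hx2⟩
        exact ⟨hx1, hW1 (by simp [hTzdef, Finset.mem_filter, hx1, hx2])⟩
    have hδ' : bdelta α M' (T ∪ W) = bdelta α M (T ∪ W) - bdelta α M W := by
      rw [bdelta_M' α M Z Z' M' hM hZ'c hZ' hr hT'c, hfil, hW3]
      ring
    have hsub := bdelta_submod α M hM hT2 hWc
    rw [hTW] at hsub
    have hTzc : (↑Tz : Set U) ⊆ M.carrier := hTzZ.trans hZC
    have hZ₀Tz : Z₀ ⊆ Tz := by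
      intro x hx
      simp only [hTzdef, Finset.mem_filter]
      exact ⟨hT1 (Finset.mem_union_right S hx), hZ₀ hx⟩
    have hδTz : dim α M Z₀ ≤ bdelta α M Tz := dim_le α M hM hZ₀Tz hTzc
    have hle : dim α M' S ≤ bdelta α M' (T ∪ W) := by
      refine csInf_le hd'bdd ⟨T ∪ W, ?_, by rw [hc]; exact hT'c, rfl⟩
      exact (Finset.subset_union_left.trans hT1).trans Finset.subset_union_left
    rw [hδ'] at hle
    rw [← hT3]
    linarith
  · -- gdim ≤ dim M' S
    refine le_csInf hd'ne ?_
    rintro z ⟨T, hST, hTc', rfl⟩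
    have hTc : (↑T : Set U) ⊆ M.carrier := hc ▸ hTc'
    set Tz := T.filter (fun x => x ∈ Z) with hTzdef
    have hTzZ : (↑Tz : Set U) ⊆ Z := by rw [hTzdef, coe_filterZ]; exact Set.inter_subset_right
    have hTzZ' : (↑Tz : Set U) ⊆ Z'.carrier := by rw [hZ'c]; exact hTzZ
    have hTzc : (↑Tz : Set U) ⊆ M.carrier := hTzZ.trans hZC
    obtain ⟨T'', h1, h2, h3⟩ := dim_attain α M hM hTzc
    set W := T''.filter (fun x => x ∈ Z) with hWdef
    have hWZ : (↑W : Set U) ⊆ Z := by rw [hWdef, coe_filterZ]; exact Set.inter_subset_right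
    have hWc : (↑W : Set U) ⊆ M.carrier := hWZ.trans hZC
    have hTzW : Tz ⊆ W := by
      intro x hx
      simp only [hTzdef, Finset.mem_filter] at hx
      simp only [hWdef, Finset.mem_filter]
      exact ⟨h1 (by simp [hTzdef, Finset.mem_filter, hx.1, hx.2]), hx.2⟩
    have hδW1 : bdelta α M W ≤ bdelta α M T'' := hZ.2 T'' h2
    have hδW2 : dim α M Tz ≤ bdelta α M W := dim_le α M hM hTzW hWc
    have hδW : bdelta α M W = dim α M Tz := le_antisymm (h3 ▸ hδW1) hδW2
    have hdimW : dim α M W = bdelta α M W := by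
      have hmono : dim α M Tz ≤ dim α M W := dim_mono α M hM hTzW hWc
      have hle2 : dim α M W ≤ bdelta α M W := dim_le α M hM (Finset.Subset.refl W) hWc
      omega
    have hTW : T ∩ W = Tz := by
      ext x
      simp only [Finset.mem_inter, hTzdef, Finset.mem_filter]
      constructor
      · rintro ⟨hx1, hx2⟩
        exact ⟨hx1, hWZ hx2⟩
      · rintro ⟨hx1, hx2⟩
        exact ⟨hx1, hTzW (by simp [hTzdef, Finset.mem_filter, hx1, hx2])⟩
    have hsub := bdelta_submod α M hM hTc hWc
    rw [hTW] at hsub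
    have hSWc : (↑(S ∪ W) : Set U) ⊆ M.carrier := coe_union_subset hS hWc
    have hTWc : (↑(T ∪ W) : Set U) ⊆ M.carrier := coe_union_subset hTc hWc
    have hdSW : dim α M (S ∪ W) ≤ bdelta α M (T ∪ W) :=
      dim_le α M hM (Finset.union_subset_union hST (Finset.Subset.refl W)) hTWc
    have hg : gdim α M Z S ≤ dim α M (S ∪ W) - dim α M W := gdim_le α M Z hM hZC hS hWZ
    have hδ' : bdelta α M' T = bdelta α M T - bdelta α M Tz + bdelta α Z' Tz :=
      bdelta_M' α M Z Z' M' hM hZ'c hZ' hr hTc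
    have hZ'nn : 0 ≤ bdelta α Z' Tz := (hZ' Tz hTzZ').2
    omega

end MainAux
/-- if `M ∈ 𝒞̄_f`, `Z ≤ M`, `Z' ∈ 𝒞̄_f` has the same underlying set,
`M'` is obtained by replacing `Z` by `Z'`, and the `d`-closure of `∅` in `Z'` is all
of `Z'` (every finite subset of `Z'` has dimension `0`), then `PG_Z(M) = PG(M')`:
the closure in `M'` of a finite set `A` equals the localized closure
`cl_M(Z ∪ A)` (a point lies in it iff it lies in `cl_M(A ∪ Z₀)` for some finite
`Z₀ ⊆ Z`). -/
theorem localization_changing {I U : Type} {ar : I → ℕ} (α : I → ℕ)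
    (hα : ∀ i, 0 < α i) (M : BigFS I ar U) (hM : inCbar α M)
    (Z : Set U) (hZ : ssSet α M Z)
    (Z' : BigFS I ar U) (hZ'c : Z'.carrier = Z) (hZ' : inCbar α Z')
    (hd0 : ∀ S : Finset U, ↑S ⊆ Z → dim α Z' S = 0)
    (M' : BigFS I ar U) (hc : M'.carrier = M.carrier)
    (hr : M'.rels = (M.rels \ M.relsIn Z) ∪ Z'.rels) :
    ∀ A : Finset U, ↑A ⊆ M.carrier →
      cld α M' A = {c | ∃ Z₀ : Finset U, ↑Z₀ ⊆ Z ∧ c ∈ cld α M (A ∪ Z₀)} := by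
  intro A hA
  have hZC : Z ⊆ M.carrier := hZ.1
  ext c
  simp only [cld, Set.mem_setOf_eq, hc]
  constructor
  · rintro ⟨hcM, hdim⟩
    have hiA : (↑(insert c A) : Set U) ⊆ M.carrier := coe_insert_subset hcM hA
    rw [dim_M'_eq α M Z Z' M' hM hZ hZ'c hZ' hd0 hc hr hiA,
      dim_M'_eq α M Z Z' M' hM hZ hZ'c hZ' hd0 hc hr hA] at hdim
    obtain ⟨Z₀, hZ₀, hZ₀eq⟩ := gdim_attain α M Z hM hZC hiA
    refine ⟨Z₀, hZ₀, hcM, ?_⟩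
    have h1 : gdim α M Z A ≤ dim α M (A ∪ Z₀) - dim α M Z₀ := gdim_le α M Z hM hZC hA hZ₀
    have hiAZc : (↑(insert c A ∪ Z₀) : Set U) ⊆ M.carrier :=
      coe_union_subset hiA (hZ₀.trans hZC)
    have h2 : dim α M (A ∪ Z₀) ≤ dim α M (insert c A ∪ Z₀) :=
      dim_mono α M hM (Finset.union_subset_union (Finset.subset_insert c A)
        (Finset.Subset.refl Z₀)) hiAZc
    have h3 : insert c A ∪ Z₀ = insert c (A ∪ Z₀) := Finset.insert_union c A Z₀
    rw [← h3]
    omega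
  · rintro ⟨Z₀, hZ₀, hcM, hdim⟩
    have hiA : (↑(insert c A) : Set U) ⊆ M.carrier := coe_insert_subset hcM hA
    refine ⟨hcM, ?_⟩
    rw [dim_M'_eq α M Z Z' M' hM hZ hZ'c hZ' hd0 hc hr hiA,
      dim_M'_eq α M Z Z' M' hM hZ hZ'c hZ' hd0 hc hr hA]
    have hAZ₀c : (↑(A ∪ Z₀) : Set U) ⊆ M.carrier := coe_union_subset hA (hZ₀.trans hZC)
    apply le_antisymm
    · -- gdim (insert c A) ≤ gdim A
      refine le_gdim α M Z ?_
      intro Z₁ hZ₁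
      set Z₂ := Z₀ ∪ Z₁ with hZ₂def
      have hZ₂ : (↑Z₂ : Set U) ⊆ Z := coe_union_subset hZ₀ hZ₁
      have hAZ₂c : (↑(A ∪ Z₂) : Set U) ⊆ M.carrier := coe_union_subset hA (hZ₂.trans hZC)
      have hiAZ₂c : (↑(insert c (A ∪ Z₂)) : Set U) ⊆ M.carrier :=
        coe_insert_subset hcM hAZ₂c
      have hXc : (↑(insert c (A ∪ Z₀)) : Set U) ⊆ M.carrier := coe_insert_subset hcM hAZ₀c
      -- step i : dim (insert c (A ∪ Z₂)) = dim (A ∪ Z₂)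
      have hXY : insert c (A ∪ Z₀) ∪ (A ∪ Z₂) = insert c (A ∪ Z₂) := by
        ext x
        simp only [Finset.mem_union, Finset.mem_insert, hZ₂def]
        tauto
      have hsub := dim_submod α M hM hXc hAZ₂c
      rw [hXY] at hsub
      have hint : A ∪ Z₀ ⊆ insert c (A ∪ Z₀) ∩ (A ∪ Z₂) := by
        refine Finset.subset_inter (Finset.subset_insert _ _) ?_
        exact Finset.union_subset_union (Finset.Subset.refl A) Finset.subset_union_left
      have hintc : (↑(insert c (A ∪ Z₀) ∩ (A ∪ Z₂)) : Set U) ⊆ M.carrier :=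
        coe_sub_of_sub Finset.inter_subset_right hAZ₂c
      have hmono1 : dim α M (A ∪ Z₀) ≤ dim α M (insert c (A ∪ Z₀) ∩ (A ∪ Z₂)) :=
        dim_mono α M hM hint hintc
      have hmono2 : dim α M (A ∪ Z₂) ≤ dim α M (insert c (A ∪ Z₂)) :=
        dim_mono α M hM (Finset.subset_insert _ _) hiAZ₂c
      have keyi : dim α M (insert c (A ∪ Z₂)) = dim α M (A ∪ Z₂) := by omega
      -- step ii : dim (A ∪ Z₂) - dim Z₂ ≤ dim (A ∪ Z₁) - dim Z₁
      have hAZ₁c : (↑(A ∪ Z₁) : Set U) ⊆ M.carrier := coe_union_subset hA (hZ₁.trans hZC)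
      have hZ₂c : (↑Z₂ : Set U) ⊆ M.carrier := hZ₂.trans hZC
      have hXY2 : (A ∪ Z₁) ∪ Z₂ = A ∪ Z₂ := by
        ext x
        simp only [Finset.mem_union, hZ₂def]
        tauto
      have hsub2 := dim_submod α M hM hAZ₁c hZ₂c
      rw [hXY2] at hsub2
      have hint2 : Z₁ ⊆ (A ∪ Z₁) ∩ Z₂ := by
        refine Finset.subset_inter Finset.subset_union_right ?_
        rw [hZ₂def]; exact Finset.subset_union_right
      have hint2c : (↑((A ∪ Z₁) ∩ Z₂) : Set U) ⊆ M.carrier :=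
        coe_sub_of_sub Finset.inter_subset_right hZ₂c
      have hmono3 : dim α M Z₁ ≤ dim α M ((A ∪ Z₁) ∩ Z₂) := dim_mono α M hM hint2 hint2c
      -- combine
      have hgd : gdim α M Z (insert c A) ≤ dim α M (insert c A ∪ Z₂) - dim α M Z₂ :=
        gdim_le α M Z hM hZC hiA hZ₂
      have hins : insert c A ∪ Z₂ = insert c (A ∪ Z₂) := Finset.insert_union c A Z₂
      rw [hins, keyi] at hgd
      omega
    · -- gdim A ≤ gdim (insert c A)
      refine le_gdim α M Z ?_
      intro Z₁ hZ₁
      have hiAZ₁c : (↑(insert c A ∪ Z₁) : Set U) ⊆ M.carrier :=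
        coe_union_subset hiA (hZ₁.trans hZC)
      have h1 : gdim α M Z A ≤ dim α M (A ∪ Z₁) - dim α M Z₁ := gdim_le α M Z hM hZC hA hZ₁
      have h2 : dim α M (A ∪ Z₁) ≤ dim α M (insert c A ∪ Z₁) :=
        dim_mono α M hM (Finset.union_subset_union (Finset.subset_insert c A)
          (Finset.Subset.refl Z₁)) hiAZ₁c
      omega
end

section
/- Strict inclusion of pregeometry classes: P₃ ⊊ P₄, where P_n is the class of finite pregeometries arising as PG(A) for some A ∈ 𝒞_n. In particular, the pregeometry of a 4-element set {a,b,c,d} in which every subset of size ≤ 3 has dimension equal to its cardinality and the whole set has dimension 3 lies in P₄ but not in P₃. -/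
open Classical

open BigFS
/-- `A ∈ 𝒞_n`: a finite structure with one `n`-ary relation, nonnegative
predimension `δ_n = |X| - |R^X|` on all substructures. -/
def inCn {U : Type} (n : ℕ) (A : BigFS PUnit (fun _ => n) U) : Prop :=
  A.carrier.Finite ∧ inCbar (fun _ => 1) A

section Aux

open Set

variable {U : Type}

private lemma finsum_one_eq {α : Type*} (s : Set α) (hs : s.Finite) :
    ∑ᶠ i ∈ s, (1 : ℤ) = s.ncard := by
  rw [← hs.coe_toFinset, finsum_mem_coe_finset]
  simp [Set.ncard_eq_toFinset_card s hs]

private def emb34 (r : (_i : PUnit) × (Fin 3 → U)) : (_i : PUnit) × (Fin 4 → U) :=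
  ⟨PUnit.unit, fun k => r.2 (if h : (k : ℕ) < 3 then ⟨k, h⟩ else ⟨2, by omega⟩)⟩

private lemma emb34_retract (r : (_i : PUnit) × (Fin 3 → U)) :
    (⟨PUnit.unit, fun j : Fin 3 => (emb34 r).2 ⟨j.1, by have h3 : (j:ℕ) < 3 := j.2; show (j:ℕ) < 4; omega⟩⟩ :
      (_i : PUnit) × (Fin 3 → U)) = r := by
  obtain ⟨⟨⟩, f⟩ := r
  simp only [emb34]
  congr 1
  funext j
  simp [Fin.is_lt j]

private lemma emb34_inj : Function.Injective (emb34 (U := U)) := fun r r' h => by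
  rw [← emb34_retract r, ← emb34_retract r', h]

private def toB (A : BigFS PUnit (fun _ => 3) U) : BigFS PUnit (fun _ => 4) U :=
  ⟨A.carrier, emb34 '' A.rels, by
    rintro r ⟨s, hs, rfl⟩ k
    exact A.mem_carrier s hs _⟩

private lemma relsIn_toB (A : BigFS PUnit (fun _ => 3) U) (S : Set U) :
    (toB A).relsIn S = emb34 '' A.relsIn S := by
  ext r
  constructor
  · rintro ⟨⟨s, hs, rfl⟩, h2⟩
    refine ⟨s, ⟨hs, fun j => ?_⟩, rfl⟩
    have := h2 ⟨j.1, by have h3 : (j:ℕ) < 3 := j.2; show (j:ℕ) < 4; omega⟩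
    simpa [emb34, Fin.is_lt j] using this
  · rintro ⟨s, ⟨hs, h2⟩, rfl⟩
    exact ⟨⟨s, hs, rfl⟩, fun k => h2 _⟩

private lemma bdelta_toB (A : BigFS PUnit (fun _ => 3) U) (S : Finset U) :
    bdelta (fun _ => 1) (toB A) S = bdelta (fun _ => 1) A S := by
  unfold bdelta
  congr 1
  rw [relsIn_toB]
  exact (finsum_mem_eq_of_bijOn emb34 (emb34_inj.injOn.bijOn_image) fun _ _ => rfl).symm

end Aux
/-- `P₃ ⊊ P₄`: every pregeometry of a structure in `𝒞₃` is the
pregeometry of a structure in `𝒞₄` (on the same carrier), and the pregeometry of a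
`4`-element set in which every subset has dimension `min(|X|, 3)` lies in `P₄` but
not in `P₃`. -/
theorem P3_lt_P4 {U : Type} [Infinite U] :
    (∀ A : BigFS PUnit (fun _ => 3) U, inCn 3 A →
      ∃ B : BigFS PUnit (fun _ => 4) U, inCn 4 B ∧ B.carrier = A.carrier ∧
        ∀ S : Finset U, dim (fun _ => 1) B S = dim (fun _ => 1) A S) ∧
    (∃ B : BigFS PUnit (fun _ => 4) U, inCn 4 B ∧ B.carrier.ncard = 4 ∧
      ∀ S : Finset U, ↑S ⊆ B.carrier →
        dim (fun _ => 1) B S = min (S.card : ℤ) 3) ∧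
    ¬ ∃ A : BigFS PUnit (fun _ => 3) U, inCn 3 A ∧ A.carrier.ncard = 4 ∧
      ∀ S : Finset U, ↑S ⊆ A.carrier →
        dim (fun _ => 1) A S = min (S.card : ℤ) 3 := by
  constructor
  · intro A hA
    refine ⟨toB A, ⟨hA.1, fun S hS => ?_⟩, rfl, fun S => ?_⟩
    · obtain ⟨hfin, hnn⟩ := hA.2 S hS
      rw [relsIn_toB]
      exact ⟨hfin.image _, by rw [bdelta_toB]; exact hnn⟩
    · unfold dim
      congr 1
      ext z
      constructor
      · rintro ⟨T, h1, h2, rfl⟩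
        exact ⟨T, h1, h2, (bdelta_toB A T).symm⟩
      · rintro ⟨T, h1, h2, rfl⟩
        exact ⟨T, h1, h2, bdelta_toB A T⟩
  constructor
  · -- Part 2: the 4-element pregeometry is in P₄
    set a : Fin 4 → U := fun i => Infinite.natEmbedding U i with ha_def
    have ha : Function.Injective a :=
      fun i j h => Fin.val_injective ((Infinite.natEmbedding U).injective h)
    set T0 : Finset U := Finset.univ.image a with hT0_def
    have hT0c : T0.card = 4 := by
      rw [hT0_def, Finset.card_image_of_injective _ ha]; simp
    set B : BigFS PUnit (fun _ => 4) U :=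
      ⟨↑T0, {⟨PUnit.unit, a⟩}, by
        rintro r hr k
        rw [Set.mem_singleton_iff] at hr; subst hr
        exact Finset.mem_coe.2 (Finset.mem_image_of_mem a (Finset.mem_univ k))⟩ with hB_def
    have hrels : ∀ S : Finset U,
        B.relsIn ↑S = if T0 ⊆ S then {⟨PUnit.unit, a⟩} else (∅ : Set _) := by
      intro S
      by_cases hTS : T0 ⊆ S
      · rw [if_pos hTS]
        ext r
        constructor
        · rintro ⟨hr, _⟩; exact hr
        · rintro hr
          rw [Set.mem_singleton_iff] at hr; subst hr
          exact ⟨rfl, fun k => Finset.mem_coe.2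
            (hTS (Finset.mem_image_of_mem a (Finset.mem_univ k)))⟩
      · rw [if_neg hTS]
        ext r
        simp only [Set.mem_empty_iff_false, iff_false]
        rintro ⟨hr, h2⟩
        rw [Set.mem_singleton_iff] at hr; subst hr
        exact hTS (Finset.image_subset_iff.2 fun k _ => h2 k)
    have hbd : ∀ S : Finset U,
        bdelta (fun _ => 1) B S = if T0 ⊆ S then (S.card : ℤ) - 1 else (S.card : ℤ) := by
      intro S
      unfold bdelta
      rw [hrels]
      split
      · rw [finsum_mem_singleton]; norm_num
      · rw [finsum_mem_empty]; ring
    refine ⟨B, ⟨Finset.finite_toSet T0, fun S hS => ?_⟩, ?_, fun S hS => ?_⟩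
    · have hST : S ⊆ T0 := Finset.coe_subset.1 hS
      refine ⟨Set.Finite.subset (Set.finite_singleton _) (Set.sep_subset _ _), ?_⟩
      rw [hbd]
      split
      · rename_i h
        have : S = T0 := Finset.Subset.antisymm hST h
        rw [this, hT0c]; norm_num
      · positivity
    · show (↑T0 : Set U).ncard = 4
      rw [Set.ncard_coe_finset]; exact hT0c
    · have hST : S ⊆ T0 := Finset.coe_subset.1 hS
      have hlb : ∀ z ∈ {z : ℤ | ∃ T : Finset U, S ⊆ T ∧ ↑T ⊆ B.carrier ∧
          bdelta (fun _ => 1) B T = z}, min (S.card : ℤ) 3 ≤ z := by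
        rintro z ⟨T, h1, h2, rfl⟩
        have hTT0 : T ⊆ T0 := Finset.coe_subset.1 h2
        rw [hbd]
        split
        · rename_i h
          have : T = T0 := Finset.Subset.antisymm hTT0 h
          rw [this, hT0c]
          exact le_trans (min_le_right _ _) (by norm_num)
        · exact le_trans (min_le_left _ _) (by exact_mod_cast Finset.card_le_card h1)
      have hmem : min (S.card : ℤ) 3 ∈ {z : ℤ | ∃ T : Finset U, S ⊆ T ∧ ↑T ⊆ B.carrier ∧
          bdelta (fun _ => 1) B T = z} := by
        by_cases hTS : T0 ⊆ S
        · have hSeq : S = T0 := Finset.Subset.antisymm hST hTS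
          refine ⟨S, Finset.Subset.refl S, hS, ?_⟩
          rw [hbd, if_pos hTS, hSeq, hT0c]
          norm_num
        · refine ⟨S, Finset.Subset.refl S, hS, ?_⟩
          rw [hbd, if_neg hTS]
          have hlt : S.card < 4 := by
            rw [← hT0c]
            exact Finset.card_lt_card (lt_of_le_of_ne hST (fun h => hTS (h ▸ Finset.Subset.refl _)))
          rw [min_eq_left (by exact_mod_cast Nat.lt_succ_iff.1 hlt)]
      unfold dim
      exact le_antisymm (csInf_le ⟨_, hlb⟩ hmem) (le_csInf ⟨_, hmem⟩ hlb)
  · -- Part 3: not in P₃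
    rintro ⟨A, ⟨hfin, hcbar⟩, hcard, hd⟩
    set C : Finset U := hfin.toFinset with hC_def
    have hC : ↑C = A.carrier := hfin.coe_toFinset
    have hCc : C.card = 4 := by
      rw [← hcard, Set.ncard_eq_toFinset_card A.carrier hfin]
    rcases Set.eq_empty_or_nonempty A.rels with he | ⟨r, hr⟩
    · -- no relations: dim of the whole carrier is 4, not 3
      have hrelsC : A.relsIn ↑C = ∅ := by
        rw [Set.eq_empty_iff_forall_notMem]
        rintro s ⟨hs, -⟩
        rw [he] at hs; exact hs
      have hbdC : bdelta (fun _ => 1) A C = 4 := by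
        unfold bdelta
        rw [hrelsC, finsum_mem_empty, hCc]; ring
      have hDC : {z : ℤ | ∃ T : Finset U, C ⊆ T ∧ ↑T ⊆ A.carrier ∧
          bdelta (fun _ => 1) A T = z} = {4} := by
        ext z
        constructor
        · rintro ⟨T, h1, h2, rfl⟩
          have hTC : T ⊆ C := Finset.coe_subset.1 (by rw [hC]; exact h2)
          have : T = C := Finset.Subset.antisymm hTC h1
          rw [this, hbdC]; rfl
        · rintro rfl
          exact ⟨C, Finset.Subset.refl C, hC ▸ subset_rfl, hbdC⟩
      have h4 : dim (fun _ => 1) A C = 4 := by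
        unfold dim; rw [hDC]; exact csInf_singleton 4
      have h3 := hd C (hC ▸ subset_rfl)
      rw [h4, hCc] at h3
      norm_num at h3
    · -- some relation: a 3-element superset of its entries has dimension ≤ 2
      have hrim : ∀ k, r.2 k ∈ C := fun k => hfin.mem_toFinset.2 (A.mem_carrier r hr k)
      set ImF : Finset U := Finset.univ.image r.2 with hImF_def
      have hImC : ImF ⊆ C := Finset.image_subset_iff.2 fun k _ => hrim k
      have hImcard : ImF.card ≤ 3 := le_trans (Finset.card_image_le) (by simp)
      obtain ⟨S, hImS, hSC, hScard⟩ :=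
        Finset.exists_subsuperset_card_eq hImC hImcard (by omega)
      have hSc : ↑S ⊆ A.carrier := by rw [← hC]; exact Finset.coe_subset.2 hSC
      have hfinS := (hcbar S hSc).1
      have hrS : r ∈ A.relsIn ↑S := by
        refine ⟨hr, fun k => ?_⟩
        exact Finset.mem_coe.2 (hImS (Finset.mem_image_of_mem r.2 (Finset.mem_univ k)))
      have hsum : (1 : ℤ) ≤ ∑ᶠ s ∈ A.relsIn ↑S, ((fun _ : PUnit => (1:ℕ)) s.1 : ℤ) := by
        have : ∑ᶠ s ∈ A.relsIn ↑S, ((fun _ : PUnit => (1:ℕ)) s.1 : ℤ)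
            = (A.relsIn ↑S).ncard := by
          rw [← finsum_one_eq _ hfinS]
          exact finsum_mem_congr rfl fun _ _ => by norm_num
        rw [this]
        exact_mod_cast (Set.ncard_pos hfinS).2 ⟨r, hrS⟩
      have hbdS : bdelta (fun _ => 1) A S ≤ 2 := by
        unfold bdelta
        rw [hScard]
        push_cast at hsum ⊢
        omega
      have hdimS : dim (fun _ => 1) A S ≤ 2 := by
        unfold dim
        refine le_trans (csInf_le ⟨0, ?_⟩ ⟨S, Finset.Subset.refl S, hSc, rfl⟩) hbdS
        rintro z ⟨T, -, h2, rfl⟩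
        exact (hcbar T h2).2
      have h3 := hd S hSc
      rw [hScard] at h3
      norm_num at h3
      rw [h3] at hdimS
      norm_num at hdimS
end

section
/- The class of finite pregeometries (P_n, ⊴_n) has the amalgamation property: if A₀ ⊴_n A₁ ∈ P_n and A₀ ⊴_n A₂ ∈ P_n, then there exist P ∈ P_n and embeddings of pregeometries f_i : A_i → P (i = 1,2) agreeing on A₀ such that f_i(A_i) ⊴_n P. -/
open Classical

open BigFS

-- ===================== my additions  =====================
namespace BigFS

variable {I U : Type} {ar : I → ℕ}

lemma filter_coe_eq_inter (T W : Finset U)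
    [DecidablePred (fun x => x ∈ (↑W : Set U))] :
    T.filter (fun x => x ∈ (↑W : Set U)) = T ∩ W := by
  ext x; simp

lemma relsIn_mono (M : BigFS I ar U) {Z Z' : Set U} (h : Z ⊆ Z') :
    M.relsIn Z ⊆ M.relsIn Z' := fun r hr => ⟨hr.1, fun k => h (hr.2 k)⟩

lemma relsIn_subset (M : BigFS I ar U) (Z : Set U) : M.relsIn Z ⊆ M.rels :=
  fun _ hr => hr.1

lemma relsIn_self {M : BigFS I ar U} {V : Finset U} (hc : M.carrier = ↑V) :
    M.relsIn ↑V = M.rels := by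
  apply Set.Subset.antisymm (relsIn_subset M _)
  intro r hr
  exact ⟨hr, fun k => hc ▸ M.mem_carrier r hr k⟩

lemma rels_finite {M : BigFS I ar U} {V : Finset U} (hc : M.carrier = ↑V)
    (hM : inCbar (fun _ => 1) M) : M.rels.Finite := by
  have h := (hM V (by rw [hc])).1
  rw [relsIn_self hc] at h; exact h

lemma relsIn_congr {M N : BigFS I ar U} {Z : Set U} (h : N.rels = M.relsIn Z)
    {S : Set U} (hS : S ⊆ Z) : N.relsIn S = M.relsIn S := by
  ext r
  constructor
  · rintro ⟨hr, he⟩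
    rw [h] at hr
    exact ⟨hr.1, he⟩
  · rintro ⟨hr, he⟩
    exact ⟨by rw [h]; exact ⟨hr, fun k => hS (he k)⟩, he⟩

lemma bdelta_congr {M N : BigFS I ar U} {S : Finset U} (α : I → ℕ)
    (h : N.relsIn ↑S = M.relsIn ↑S) : bdelta α N S = bdelta α M S := by
  unfold bdelta; rw [h]

lemma bdelta_eq_ncard (M : BigFS I ar U) (S : Finset U)
    (h : (M.relsIn (↑S : Set U)).Finite) :
    bdelta (fun _ => 1) M S = (S.card : ℤ) - (M.relsIn ↑S).ncard := by
  unfold bdelta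
  rw [finsum_mem_eq_finite_toFinset_sum _ h]
  simp [Set.ncard_eq_toFinset_card _ h]

lemma bdelta_submod (M : BigFS I ar U) (hfin : M.rels.Finite) (X Y : Finset U) :
    bdelta (fun _ => 1) M (X ∪ Y) + bdelta (fun _ => 1) M (X ∩ Y)
      ≤ bdelta (fun _ => 1) M X + bdelta (fun _ => 1) M Y := by
  have fX := hfin.subset (relsIn_subset M (↑X))
  have fY := hfin.subset (relsIn_subset M (↑Y))
  have fU := hfin.subset (relsIn_subset M (↑(X ∪ Y)))
  have fI := hfin.subset (relsIn_subset M (↑(X ∩ Y)))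
  rw [bdelta_eq_ncard _ _ fX, bdelta_eq_ncard _ _ fY, bdelta_eq_ncard _ _ fU,
    bdelta_eq_ncard _ _ fI]
  have hcard : (X ∪ Y).card + (X ∩ Y).card = X.card + Y.card :=
    Finset.card_union_add_card_inter X Y
  have hsub : M.relsIn ↑X ∪ M.relsIn ↑Y ⊆ M.relsIn ↑(X ∪ Y) := by
    rw [Finset.coe_union]
    exact Set.union_subset (relsIn_mono M Set.subset_union_left)
      (relsIn_mono M Set.subset_union_right)
  have hint : M.relsIn ↑X ∩ M.relsIn ↑Y = M.relsIn ↑(X ∩ Y) := by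
    ext r
    simp only [Set.mem_inter_iff, relsIn, Set.mem_setOf_eq, Finset.coe_inter]
    constructor
    · rintro ⟨⟨h1, h2⟩, ⟨_, h4⟩⟩; exact ⟨h1, fun k => ⟨h2 k, h4 k⟩⟩
    · rintro ⟨h1, h2⟩; exact ⟨⟨h1, fun k => (h2 k).1⟩, ⟨h1, fun k => (h2 k).2⟩⟩
  have key : (M.relsIn ↑X).ncard + (M.relsIn ↑Y).ncard ≤
      (M.relsIn ↑(X ∪ Y)).ncard + (M.relsIn ↑(X ∩ Y)).ncard := by
    have h1 := Set.ncard_union_add_ncard_inter (M.relsIn ↑X) (M.relsIn ↑Y) fX fY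
    have h2 : (M.relsIn ↑X ∪ M.relsIn ↑Y).ncard ≤ (M.relsIn ↑(X ∪ Y)).ncard :=
      Set.ncard_le_ncard hsub fU
    rw [hint] at h1
    omega
  have : ((M.relsIn ↑X).ncard : ℤ) + (M.relsIn ↑Y).ncard ≤
      ((M.relsIn ↑(X ∪ Y)).ncard : ℤ) + (M.relsIn ↑(X ∩ Y)).ncard := by exact_mod_cast key
  have hc : ((X ∪ Y).card : ℤ) + (X ∩ Y).card = (X.card : ℤ) + Y.card := by exact_mod_cast hcard
  linarith

end BigFS

-- dim lemmas
namespace BigFS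
variable {I U : Type} {ar : I → ℕ}

lemma dim_le {M : BigFS I ar U} (hM : inCbar (fun _ => 1) M) {S T : Finset U}
    (hST : S ⊆ T) (hT : ↑T ⊆ M.carrier) :
    dim (fun _ => 1) M S ≤ bdelta (fun _ => 1) M T := by
  apply csInf_le
  · refine ⟨0, ?_⟩
    rintro z ⟨T', _, hT', rfl⟩
    exact (hM T' hT').2
  · exact ⟨T, hST, hT, rfl⟩

lemma le_dim {M : BigFS I ar U} {S : Finset U} (hS : ↑S ⊆ M.carrier) {c : ℤ}
    (h : ∀ T : Finset U, S ⊆ T → ↑T ⊆ M.carrier → c ≤ bdelta (fun _ => 1) M T) :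
    c ≤ dim (fun _ => 1) M S := by
  refine le_csInf ⟨bdelta (fun _ => 1) M S, S, subset_rfl, hS, rfl⟩ ?_
  rintro z ⟨T, hST, hT, rfl⟩
  exact h T hST hT

lemma dim_exists {M : BigFS I ar U} (hM : inCbar (fun _ => 1) M) {S : Finset U}
    (hS : ↑S ⊆ M.carrier) :
    ∃ T : Finset U, S ⊆ T ∧ ↑T ⊆ M.carrier ∧
      bdelta (fun _ => 1) M T = dim (fun _ => 1) M S := by
  have h1 : ({z : ℤ | ∃ T : Finset U, S ⊆ T ∧ ↑T ⊆ M.carrier ∧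
      bdelta (fun _ => 1) M T = z}).Nonempty :=
    ⟨bdelta (fun _ => 1) M S, S, subset_rfl, hS, rfl⟩
  have h2 : BddBelow {z : ℤ | ∃ T : Finset U, S ⊆ T ∧ ↑T ⊆ M.carrier ∧
      bdelta (fun _ => 1) M T = z} := by
    refine ⟨0, ?_⟩
    rintro z ⟨T', _, hT', rfl⟩
    exact (hM T' hT').2
  obtain ⟨T, hST, hT, hb⟩ := Int.csInf_mem h1 h2
  exact ⟨T, hST, hT, hb⟩

lemma inCbar_induced {M N : BigFS I ar U} {W : Finset U}
    (hNc : N.carrier = ↑W) (hWM : (↑W : Set U) ⊆ M.carrier)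
    (hrels : N.rels = M.relsIn ↑W) (hM : inCbar (fun _ => 1) M) :
    inCbar (fun _ => 1) N := by
  intro S hS
  rw [hNc] at hS
  have hSW : (↑S : Set U) ⊆ ↑W := hS
  have hcongr := relsIn_congr hrels hSW
  rw [hcongr]
  have := hM S (hSW.trans hWM)
  refine ⟨this.1, ?_⟩
  have : bdelta (fun _ => 1) N S = bdelta (fun _ => 1) M S := bdelta_congr _ hcongr
  rw [this]
  exact (hM S (hSW.trans hWM)).2

/-- dimension transfer: if `N` is the induced structure of `M` on the
self-sufficient set `W`, then dims of subsets of `W` agree. -/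
lemma dim_transfer {M N : BigFS I ar U} {W : Finset U}
    (hNc : N.carrier = ↑W) (hWM : (↑W : Set U) ⊆ M.carrier)
    (hrels : N.rels = M.relsIn ↑W)
    (hM : inCbar (fun _ => 1) M)
    (hss : ∀ T : Finset U, ↑T ⊆ M.carrier →
      bdelta (fun _ => 1) M (T ∩ W) ≤ bdelta (fun _ => 1) M T)
    {S : Finset U} (hSW : S ⊆ W) : dim (fun _ => 1) M S = dim (fun _ => 1) N S := by
  have hN : inCbar (fun _ => 1) N := inCbar_induced hNc hWM hrels hM
  have hbd : ∀ T : Finset U, T ⊆ W →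
      bdelta (fun _ => 1) N T = bdelta (fun _ => 1) M T := fun T hT =>
    bdelta_congr _ (relsIn_congr hrels (by exact_mod_cast Finset.coe_subset.mpr hT))
  apply le_antisymm
  · apply le_dim (show (↑S : Set U) ⊆ N.carrier by rw [hNc]; exact_mod_cast hSW)
    rintro T hST hT
    rw [hNc] at hT
    have hTW : T ⊆ W := by exact_mod_cast hT
    rw [hbd T hTW]
    exact dim_le hM hST ((Finset.coe_subset.mpr hTW).trans hWM)
  · apply le_dim (show (↑S : Set U) ⊆ M.carrier from
      (Finset.coe_subset.mpr hSW).trans hWM)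
    rintro T hST hT
    have h1 : dim (fun _ => 1) N S ≤ bdelta (fun _ => 1) N (T ∩ W) := by
      apply dim_le hN
      · exact Finset.subset_inter hST hSW
      · rw [hNc]; exact_mod_cast Finset.inter_subset_right
    have h2 : bdelta (fun _ => 1) N (T ∩ W) = bdelta (fun _ => 1) M (T ∩ W) :=
      hbd _ Finset.inter_subset_right
    have h3 := hss T hT
    linarith

end BigFS
-- transport along an injection
namespace BigFS
variable {I U : Type} {ar : I → ℕ}

def mapStr (f : U → U) (M : BigFS I ar U) : BigFS I ar U where
  carrier := f '' M.carrier
  rels := (fun r : (i : I) × (Fin (ar i) → U) => (⟨r.1, f ∘ r.2⟩ : (i : I) × (Fin (ar i) → U))) '' M.rels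
  mem_carrier := by
    rintro r ⟨s, hs, rfl⟩ k
    exact ⟨s.2 k, M.mem_carrier s hs k, rfl⟩

variable {f : U → U} {M : BigFS I ar U} {V : Finset U}

lemma mapStr_relsIn (hc : M.carrier = ↑V) (hf : Set.InjOn f ↑V)
    {S : Finset U} (hS : S ⊆ V) :
    (mapStr f M).relsIn ↑(S.image f) =
      (fun r : (i : I) × (Fin (ar i) → U) => (⟨r.1, f ∘ r.2⟩ : (i : I) × (Fin (ar i) → U))) '' (M.relsIn ↑S) := by
  ext r
  constructor
  · rintro ⟨⟨s, hs, rfl⟩, he⟩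
    refine ⟨s, ⟨hs, fun k => ?_⟩, rfl⟩
    have h1 : f (s.2 k) ∈ S.image f := by exact_mod_cast he k
    obtain ⟨x, hxS, hx⟩ := Finset.mem_image.mp h1
    have hsk : s.2 k ∈ (↑V : Set U) := by rw [← hc]; exact M.mem_carrier s hs k
    have : x = s.2 k := hf (by exact_mod_cast hS hxS) hsk hx
    rw [← this]; exact_mod_cast hxS
  · rintro ⟨s, ⟨hs, he⟩, rfl⟩
    refine ⟨⟨s, hs, rfl⟩, fun k => ?_⟩
    simp only [Function.comp_apply]
    exact_mod_cast Finset.mem_image_of_mem f (by exact_mod_cast he k)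

lemma mapStr_injOn_rels (hc : M.carrier = ↑V) (hf : Set.InjOn f ↑V) :
    Set.InjOn (fun r : (i : I) × (Fin (ar i) → U) => (⟨r.1, f ∘ r.2⟩ : (i : I) × (Fin (ar i) → U))) M.rels := by
  rintro ⟨i, x⟩ hx ⟨j, y⟩ hy h
  simp only [Sigma.mk.inj_iff] at h
  obtain ⟨rfl, h2⟩ := h
  have h2' : f ∘ x = f ∘ y := eq_of_heq h2
  congr 1
  funext k
  have hxk : x k ∈ (↑V : Set U) := by rw [← hc]; exact M.mem_carrier _ hx k
  have hyk : y k ∈ (↑V : Set U) := by rw [← hc]; exact M.mem_carrier _ hy k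
  exact hf hxk hyk (congrFun h2' k)

lemma mapStr_bdelta (hc : M.carrier = ↑V) (hf : Set.InjOn f ↑V)
    (hfin : M.rels.Finite) {S : Finset U} (hS : S ⊆ V) :
    bdelta (fun _ => 1) (mapStr f M) (S.image f) = bdelta (fun _ => 1) M S := by
  have h1 := mapStr_relsIn hc hf hS
  have hfin1 : (M.relsIn (↑S : Set U)).Finite := hfin.subset (relsIn_subset M _)
  have hfin2 : ((mapStr f M).relsIn (↑(S.image f) : Set U)).Finite := by
    rw [h1]; exact hfin1.image _
  rw [bdelta_eq_ncard _ _ hfin1, bdelta_eq_ncard _ _ hfin2, h1]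
  have hcards : (S.image f).card = S.card :=
    Finset.card_image_of_injOn (hf.mono (by exact_mod_cast hS))
  have hncard : ((fun r : (i : I) × (Fin (ar i) → U) => (⟨r.1, f ∘ r.2⟩ : (i : I) × (Fin (ar i) → U))) '' (M.relsIn ↑S)).ncard = (M.relsIn (↑S : Set U)).ncard :=
    Set.ncard_image_of_injOn ((mapStr_injOn_rels hc hf).mono (relsIn_subset M _))
  rw [hcards, hncard]

lemma mapStr_preimage (hf : Set.InjOn f ↑V) {T : Finset U}
    (hT : ↑T ⊆ (mapStr f M).carrier) (hc : M.carrier = ↑V) :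
    (V.filter (fun x => f x ∈ T)).image f = T := by
  apply Finset.Subset.antisymm
  · intro t ht
    obtain ⟨x, hx, rfl⟩ := Finset.mem_image.mp ht
    exact (Finset.mem_filter.mp hx).2
  · intro t ht
    have : t ∈ (mapStr f M).carrier := hT (by exact_mod_cast ht)
    obtain ⟨x, hx, rfl⟩ := this
    have hxV : x ∈ V := by rwa [hc] at hx
    exact Finset.mem_image_of_mem f (Finset.mem_filter.mpr ⟨hxV, ht⟩)

lemma mapStr_inCbar (hc : M.carrier = ↑V) (hf : Set.InjOn f ↑V)
    (hfin : M.rels.Finite) (hM : inCbar (fun _ => 1) M) :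
    inCbar (fun _ => 1) (mapStr f M) := by
  intro T hT
  set T₀ := V.filter (fun x => f x ∈ T) with hT₀
  have him : T₀.image f = T := mapStr_preimage hf hT hc
  have hT₀V : T₀ ⊆ V := Finset.filter_subset _ _
  constructor
  · have := mapStr_relsIn hc hf hT₀V
    rw [him] at this
    rw [this]
    exact (hfin.subset (relsIn_subset M _)).image _
  · rw [← him, mapStr_bdelta hc hf hfin hT₀V]
    exact (hM T₀ (by rw [hc]; exact_mod_cast hT₀V)).2

lemma mapStr_dim (hc : M.carrier = ↑V) (hf : Set.InjOn f ↑V)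
    (hfin : M.rels.Finite) {S : Finset U} (hS : S ⊆ V) :
    dim (fun _ => 1) (mapStr f M) (S.image f) = dim (fun _ => 1) M S := by
  unfold dim
  congr 1
  ext z
  simp only [Set.mem_setOf_eq]
  constructor
  · rintro ⟨T, hST, hT, rfl⟩
    set T₀ := V.filter (fun x => f x ∈ T) with hT₀def
    have him : T₀.image f = T := mapStr_preimage hf hT hc
    have hT₀V : T₀ ⊆ V := Finset.filter_subset _ _
    refine ⟨T₀, ?_, by rw [hc]; exact_mod_cast hT₀V, ?_⟩
    · intro x hx
      have hxV : x ∈ V := hS hx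
      have : f x ∈ T := hST (Finset.mem_image_of_mem f hx)
      exact Finset.mem_filter.mpr ⟨hxV, this⟩
    · rw [← him, mapStr_bdelta hc hf hfin hT₀V]
  · rintro ⟨T₀, hST₀, hT₀, rfl⟩
    have hT₀V : T₀ ⊆ V := by rw [hc] at hT₀; exact_mod_cast hT₀
    refine ⟨T₀.image f, Finset.image_subset_image hST₀, ?_, mapStr_bdelta hc hf hfin hT₀V⟩
    intro t ht
    obtain ⟨x, hx, rfl⟩ := Finset.mem_image.mp (by exact_mod_cast ht)
    exact ⟨x, by rw [hc]; exact_mod_cast hT₀V hx, rfl⟩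

/-- transport of self-sufficiency of `V₀`, when `f` is the identity on `V₀`
and no point of `V \ V₀` is mapped into `V₀`. -/
lemma mapStr_ss (hc : M.carrier = ↑V) (hf : Set.InjOn f ↑V)
    (hfin : M.rels.Finite) {V₀ : Finset U} (hV₀ : V₀ ⊆ V)
    (hid : ∀ x ∈ V₀, f x = x) (hout : ∀ x ∈ V, f x ∈ V₀ → x ∈ V₀)
    (hss : ∀ T : Finset U, ↑T ⊆ M.carrier →
      bdelta (fun _ => 1) M (T ∩ V₀) ≤ bdelta (fun _ => 1) M T) :
    ∀ T : Finset U, ↑T ⊆ (mapStr f M).carrier →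
      bdelta (fun _ => 1) (mapStr f M) (T ∩ V₀) ≤ bdelta (fun _ => 1) (mapStr f M) T := by
  intro T hT
  set T₀ := V.filter (fun x => f x ∈ T) with hT₀def
  have him : T₀.image f = T := mapStr_preimage hf hT hc
  have hT₀V : T₀ ⊆ V := Finset.filter_subset _ _
  have hfilt : (T₀ ∩ V₀).image f = T ∩ V₀ := by
    apply Finset.Subset.antisymm
    · intro t ht
      obtain ⟨x, hx, rfl⟩ := Finset.mem_image.mp ht
      have hx₀ : x ∈ V₀ := (Finset.mem_inter.mp hx).2
      have hxT₀ : x ∈ T₀ := (Finset.mem_inter.mp hx).1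
      rw [hid x hx₀]
      refine Finset.mem_inter.mpr ⟨?_, hx₀⟩
      have := (Finset.mem_filter.mp hxT₀).2
      rwa [hid x hx₀] at this
    · intro t ht
      obtain ⟨htT, htV₀⟩ := Finset.mem_inter.mp ht
      obtain ⟨x, hxT₀, rfl⟩ := Finset.mem_image.mp (by rw [← him] at htT; exact htT)
      have hxV : x ∈ V := hT₀V hxT₀
      have hx₀ : x ∈ V₀ := hout x hxV htV₀
      exact Finset.mem_image_of_mem f (Finset.mem_inter.mpr ⟨hxT₀, hx₀⟩)
  have h1 : bdelta (fun _ => 1) (mapStr f M) (T ∩ V₀) = bdelta (fun _ => 1) M (T₀ ∩ V₀) := by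
    rw [← hfilt]; exact mapStr_bdelta hc hf hfin (Finset.inter_subset_left.trans hT₀V)
  have h2 : bdelta (fun _ => 1) (mapStr f M) T = bdelta (fun _ => 1) M T₀ := by
    rw [← him]; exact mapStr_bdelta hc hf hfin hT₀V
  rw [h1, h2]
  exact hss T₀ (by rw [hc]; exact_mod_cast hT₀V)

end BigFS
-- the swap (changing) lemma
namespace BigFS
variable {I U : Type} {ar : I → ℕ}
variable {B B' A₁ A₂ : BigFS I ar U} {W V₀ : Finset U}

lemma swap_relsIn
    (hA₁c : A₁.carrier = ↑V₀)
    (hB'rels : B'.rels = (B.rels \ A₂.rels) ∪ A₁.rels)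
    (hA₂rels : A₂.rels = B.relsIn ↑V₀) (T : Finset U) :
    B'.relsIn ↑T = (B.relsIn ↑T \ A₂.relsIn ↑(T ∩ V₀)) ∪ A₁.relsIn ↑(T ∩ V₀) := by
  ext r
  constructor
  · rintro ⟨hr, he⟩
    rw [hB'rels] at hr
    rcases hr with ⟨hrB, hrA₂⟩ | hrA₁
    · exact Or.inl ⟨⟨hrB, he⟩, fun hmem => hrA₂ hmem.1⟩
    · refine Or.inr ⟨hrA₁, fun k => ?_⟩
      rw [Finset.coe_inter]
      exact ⟨he k, hA₁c ▸ A₁.mem_carrier r hrA₁ k⟩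
  · rintro (⟨⟨hrB, he⟩, hnot⟩ | ⟨hrA₁, he⟩)
    · refine ⟨?_, he⟩
      rw [hB'rels]
      refine Or.inl ⟨hrB, fun hA₂mem => hnot ⟨hA₂mem, fun k => ?_⟩⟩
      rw [Finset.coe_inter]
      have hmem : r ∈ B.relsIn ↑V₀ := by rw [← hA₂rels]; exact hA₂mem
      exact ⟨he k, hmem.2 k⟩
    · refine ⟨by rw [hB'rels]; exact Or.inr hrA₁, fun k => ?_⟩
      have := he k
      rw [Finset.coe_inter] at this
      exact this.1

lemma swap_bdelta
    (hA₁c : A₁.carrier = ↑V₀)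
    (hB'rels : B'.rels = (B.rels \ A₂.rels) ∪ A₁.rels)
    (hA₂rels : A₂.rels = B.relsIn ↑V₀)
    (hBfin : B.rels.Finite) (hA₁fin : A₁.rels.Finite) (T : Finset U) :
    bdelta (fun _ => 1) B' T = bdelta (fun _ => 1) B T
      + bdelta (fun _ => 1) A₁ (T ∩ V₀) - bdelta (fun _ => 1) A₂ (T ∩ V₀) := by
  have hXfin : (B.relsIn (↑T : Set U)).Finite := hBfin.subset (relsIn_subset B _)
  have hYfin : (A₂.relsIn (↑(T ∩ V₀) : Set U)).Finite := hBfin.subset (fun r hr =>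
    relsIn_subset B _ (hA₂rels ▸ (relsIn_subset A₂ _ hr)))
  have hZfin : (A₁.relsIn (↑(T ∩ V₀) : Set U)).Finite := hA₁fin.subset (relsIn_subset A₁ _)
  have hYX : A₂.relsIn ↑(T ∩ V₀) ⊆ B.relsIn (↑T : Set U) := by
    rintro r ⟨hr, he⟩
    have hrB : r ∈ B.relsIn ↑V₀ := by rw [← hA₂rels]; exact hr
    refine ⟨hrB.1, fun k => ?_⟩
    have := he k
    rw [Finset.coe_inter] at this
    exact this.1
  have hdisj : Disjoint (B.relsIn ↑T \ A₂.relsIn ↑(T ∩ V₀)) (A₁.relsIn ↑(T ∩ V₀)) := by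
    rw [Set.disjoint_left]
    rintro r ⟨hrX, hrY⟩ hrZ
    apply hrY
    refine ⟨?_, hrZ.2⟩
    rw [hA₂rels]
    refine ⟨hrX.1, fun k => ?_⟩
    have := hrZ.2 k
    rw [Finset.coe_inter] at this
    exact this.2
  have hrelsIn := swap_relsIn hA₁c hB'rels hA₂rels T
  have hB'fin : (B'.relsIn (↑T : Set U)).Finite := by
    rw [hrelsIn]; exact (hXfin.subset Set.diff_subset).union hZfin
  have n1 : (B.relsIn (↑T : Set U) \ A₂.relsIn ↑(T ∩ V₀)).ncard
      + (A₂.relsIn (↑(T ∩ V₀) : Set U)).ncard = (B.relsIn (↑T : Set U)).ncard :=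
    Set.ncard_diff_add_ncard_of_subset hYX hXfin
  have n2 : ((B.relsIn ↑T \ A₂.relsIn ↑(T ∩ V₀)) ∪ A₁.relsIn ↑(T ∩ V₀)).ncard
      = (B.relsIn (↑T : Set U) \ A₂.relsIn ↑(T ∩ V₀)).ncard
        + (A₁.relsIn (↑(T ∩ V₀) : Set U)).ncard :=
    Set.ncard_union_eq hdisj (hXfin.subset Set.diff_subset) hZfin
  rw [bdelta_eq_ncard _ _ hB'fin, bdelta_eq_ncard _ _ hXfin, bdelta_eq_ncard _ _ hZfin,
    bdelta_eq_ncard _ _ hYfin, hrelsIn, n2]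
  omega

lemma swap_relsIn_V₀
    (hA₁c : A₁.carrier = ↑V₀) (hA₂c : A₂.carrier = ↑V₀)
    (hB'rels : B'.rels = (B.rels \ A₂.rels) ∪ A₁.rels)
    (hA₂rels : A₂.rels = B.relsIn ↑V₀) :
    B'.relsIn ↑V₀ = A₁.rels := by
  have := swap_relsIn hA₁c hB'rels hA₂rels (B := B) V₀
  rw [Finset.inter_self] at this
  rw [this, relsIn_self hA₁c, relsIn_self hA₂c, ← hA₂rels, Set.diff_self,
    Set.empty_union]

lemma swap_inCbar
    (hBc : B.carrier = ↑W) (hB'c : B'.carrier = ↑W) (hV₀W : V₀ ⊆ W)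
    (hA₁c : A₁.carrier = ↑V₀) (hA₂c : A₂.carrier = ↑V₀)
    (hB'rels : B'.rels = (B.rels \ A₂.rels) ∪ A₁.rels)
    (hA₂rels : A₂.rels = B.relsIn ↑V₀)
    (hBfin : B.rels.Finite) (hA₁fin : A₁.rels.Finite)
    (hB : inCbar (fun _ => 1) B) (hA₁ : inCbar (fun _ => 1) A₁)
    (hss : ∀ T : Finset U, ↑T ⊆ B.carrier →
      bdelta (fun _ => 1) B (T ∩ V₀) ≤ bdelta (fun _ => 1) B T) :
    inCbar (fun _ => 1) B' := by
  intro T hT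
  rw [hB'c] at hT
  constructor
  · rw [swap_relsIn hA₁c hB'rels hA₂rels T]
    exact ((hBfin.subset (relsIn_subset B _)).subset Set.diff_subset).union
      (hA₁fin.subset (relsIn_subset A₁ _))
  · rw [swap_bdelta hA₁c hB'rels hA₂rels hBfin hA₁fin T]
    have h1 : bdelta (fun _ => 1) B (T ∩ V₀) ≤ bdelta (fun _ => 1) B T :=
      hss T (by rw [hBc]; exact hT)
    have h2 : bdelta (fun _ => 1) A₂ (T ∩ V₀) = bdelta (fun _ => 1) B (T ∩ V₀) :=
      bdelta_congr _ (relsIn_congr hA₂rels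
        (by rw [Finset.coe_inter]; exact Set.inter_subset_right))
    have h3 : 0 ≤ bdelta (fun _ => 1) A₁ (T ∩ V₀) :=
      (hA₁ (T ∩ V₀) (by rw [hA₁c, Finset.coe_inter]; exact Set.inter_subset_right)).2
    linarith

lemma swap_ss
    (hB'c : B'.carrier = ↑W)
    (hA₁c : A₁.carrier = ↑V₀)
    (hB'rels : B'.rels = (B.rels \ A₂.rels) ∪ A₁.rels)
    (hA₂rels : A₂.rels = B.relsIn ↑V₀)
    (hBfin : B.rels.Finite) (hA₁fin : A₁.rels.Finite)
    (hBc : B.carrier = ↑W)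
    (hss : ∀ T : Finset U, ↑T ⊆ B.carrier →
      bdelta (fun _ => 1) B (T ∩ V₀) ≤ bdelta (fun _ => 1) B T) :
    ∀ T : Finset U, ↑T ⊆ B'.carrier →
      bdelta (fun _ => 1) B' (T ∩ V₀) ≤ bdelta (fun _ => 1) B' T := by
  intro T hT
  rw [swap_bdelta hA₁c hB'rels hA₂rels hBfin hA₁fin T,
    swap_bdelta hA₁c hB'rels hA₂rels hBfin hA₁fin (T ∩ V₀)]
  rw [Finset.inter_assoc, Finset.inter_self]
  have h1 : bdelta (fun _ => 1) B (T ∩ V₀) ≤ bdelta (fun _ => 1) B T := by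
    apply hss T
    rw [hBc, ← hB'c]; exact hT
  linarith

lemma swap_dim_le
    (hBc : B.carrier = ↑W) (hB'c : B'.carrier = ↑W) (hV₀W : V₀ ⊆ W)
    (hA₁c : A₁.carrier = ↑V₀) (hA₂c : A₂.carrier = ↑V₀)
    (hB'rels : B'.rels = (B.rels \ A₂.rels) ∪ A₁.rels)
    (hA₂rels : A₂.rels = B.relsIn ↑V₀)
    (hBfin : B.rels.Finite) (hA₁fin : A₁.rels.Finite)
    (hB : inCbar (fun _ => 1) B) (hA₁ : inCbar (fun _ => 1) A₁)
    (hA₂ : inCbar (fun _ => 1) A₂)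
    (hss : ∀ T : Finset U, ↑T ⊆ B.carrier →
      bdelta (fun _ => 1) B (T ∩ V₀) ≤ bdelta (fun _ => 1) B T)
    (hdim : ∀ S : Finset U, S ⊆ V₀ → dim (fun _ => 1) A₁ S = dim (fun _ => 1) A₂ S)
    {S : Finset U} (hSW : S ⊆ W) :
    dim (fun _ => 1) B' S ≤ dim (fun _ => 1) B S := by
  have hB' : inCbar (fun _ => 1) B' :=
    swap_inCbar hBc hB'c hV₀W hA₁c hA₂c hB'rels hA₂rels hBfin hA₁fin hB hA₁ hss
  -- minimizer for dim B S
  obtain ⟨T, hST, hTc, hTd⟩ := dim_exists hB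
    (show (↑S : Set U) ⊆ B.carrier by rw [hBc]; exact_mod_cast hSW)
  have hTW : T ⊆ W := by rw [hBc] at hTc; exact_mod_cast hTc
  -- minimizer for dim A₁ (T ∩ V₀)
  obtain ⟨Y, hTY, hYc, hYd⟩ := dim_exists hA₁
    (show (↑(T ∩ V₀) : Set U) ⊆ A₁.carrier by
      rw [hA₁c, Finset.coe_inter]; exact Set.inter_subset_right)
  have hYV₀ : Y ⊆ V₀ := by rw [hA₁c] at hYc; exact_mod_cast hYc
  have hTY' : T ∩ V₀ ⊆ Y := hTY
  have hTiY : T ∩ Y = T ∩ V₀ := by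
    apply Finset.Subset.antisymm
    · intro x hx
      obtain ⟨h1, h2⟩ := Finset.mem_inter.mp hx
      exact Finset.mem_inter.mpr ⟨h1, hYV₀ h2⟩
    · intro x hx
      exact Finset.mem_inter.mpr ⟨(Finset.mem_inter.mp hx).1, hTY' hx⟩
  have hTuY : (T ∪ Y) ∩ V₀ = Y := by
    apply Finset.Subset.antisymm
    · intro x hx
      obtain ⟨h1, h2⟩ := Finset.mem_inter.mp hx
      rcases Finset.mem_union.mp h1 with h | h
      · exact hTY' (Finset.mem_inter.mpr ⟨h, h2⟩)
      · exact h
    · intro x hx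
      exact Finset.mem_inter.mpr ⟨Finset.mem_union_right _ hx, hYV₀ hx⟩
  -- the chain
  have step1 : dim (fun _ => 1) B' S ≤ bdelta (fun _ => 1) B' (T ∪ Y) := by
    apply dim_le hB' (hST.trans Finset.subset_union_left)
    rw [hB'c]
    intro x hx
    rcases Finset.mem_union.mp (by exact_mod_cast hx) with h | h
    · exact_mod_cast hTW h
    · exact_mod_cast hV₀W (hYV₀ h)
  have step2 : bdelta (fun _ => 1) B' (T ∪ Y) = bdelta (fun _ => 1) B (T ∪ Y)
      + bdelta (fun _ => 1) A₁ Y - bdelta (fun _ => 1) A₂ Y := by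
    rw [swap_bdelta hA₁c hB'rels hA₂rels hBfin hA₁fin (T ∪ Y), hTuY]
  have step3 : bdelta (fun _ => 1) B (T ∪ Y) + bdelta (fun _ => 1) B (T ∩ V₀)
      ≤ bdelta (fun _ => 1) B T + bdelta (fun _ => 1) B Y := by
    have := bdelta_submod B hBfin T Y
    rw [hTiY] at this
    exact this
  have e4 : bdelta (fun _ => 1) A₂ (T ∩ V₀) = bdelta (fun _ => 1) B (T ∩ V₀) :=
    bdelta_congr _ (relsIn_congr hA₂rels
      (by rw [Finset.coe_inter]; exact Set.inter_subset_right))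
  have e5 : bdelta (fun _ => 1) A₂ Y = bdelta (fun _ => 1) B Y :=
    bdelta_congr _ (relsIn_congr hA₂rels (by exact_mod_cast Finset.coe_subset.mpr hYV₀))
  have e6 : dim (fun _ => 1) A₂ (T ∩ V₀) ≤ bdelta (fun _ => 1) A₂ (T ∩ V₀) :=
    dim_le hA₂ subset_rfl
      (by rw [hA₂c, Finset.coe_inter]; exact Set.inter_subset_right)
  have e7 : dim (fun _ => 1) A₁ (T ∩ V₀) = dim (fun _ => 1) A₂ (T ∩ V₀) :=
    hdim _ Finset.inter_subset_right
  linarith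

lemma swap_invol
    (hA₁c : A₁.carrier = ↑V₀)
    (hB'rels : B'.rels = (B.rels \ A₂.rels) ∪ A₁.rels)
    (hA₂rels : A₂.rels = B.relsIn ↑V₀) :
    B.rels = (B'.rels \ A₁.rels) ∪ A₂.rels := by
  have key1 : ∀ r ∈ B.rels, r ∈ A₁.rels → r ∈ A₂.rels := by
    intro r hr hrA₁
    rw [hA₂rels]
    exact ⟨hr, fun k => hA₁c ▸ A₁.mem_carrier r hrA₁ k⟩
  have key2 : A₂.rels ⊆ B.rels := by
    rw [hA₂rels]; exact relsIn_subset B _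
  ext r
  constructor
  · intro hr
    by_cases h2 : r ∈ A₂.rels
    · exact Or.inr h2
    · refine Or.inl ⟨by rw [hB'rels]; exact Or.inl ⟨hr, h2⟩,
        fun hA₁ => h2 (key1 r hr hA₁)⟩
  · rintro (⟨hB'mem, hnA₁⟩ | hA₂mem)
    · rw [hB'rels] at hB'mem
      rcases hB'mem with ⟨h, _⟩ | h
      · exact h
      · exact absurd h hnA₁
    · exact key2 hA₂mem

lemma swap_full
    (hBc : B.carrier = ↑W) (hB'c : B'.carrier = ↑W) (hV₀W : V₀ ⊆ W)
    (hA₁c : A₁.carrier = ↑V₀) (hA₂c : A₂.carrier = ↑V₀)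
    (hB'rels : B'.rels = (B.rels \ A₂.rels) ∪ A₁.rels)
    (hA₂rels : A₂.rels = B.relsIn ↑V₀)
    (hBfin : B.rels.Finite) (hA₁fin : A₁.rels.Finite)
    (hB : inCbar (fun _ => 1) B) (hA₁ : inCbar (fun _ => 1) A₁)
    (hA₂ : inCbar (fun _ => 1) A₂)
    (hss : ∀ T : Finset U, ↑T ⊆ B.carrier →
      bdelta (fun _ => 1) B (T ∩ V₀) ≤ bdelta (fun _ => 1) B T)
    (hdim : ∀ S : Finset U, S ⊆ V₀ → dim (fun _ => 1) A₁ S = dim (fun _ => 1) A₂ S) :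
    B'.relsIn ↑V₀ = A₁.rels ∧ inCbar (fun _ => 1) B' ∧
    (∀ T : Finset U, ↑T ⊆ B'.carrier →
      bdelta (fun _ => 1) B' (T ∩ V₀) ≤ bdelta (fun _ => 1) B' T) ∧
    (∀ S : Finset U, S ⊆ W → dim (fun _ => 1) B' S = dim (fun _ => 1) B S) := by
  have hrV₀ := swap_relsIn_V₀ hA₁c hA₂c hB'rels hA₂rels
  have hB'incbar : inCbar (fun _ => 1) B' :=
    swap_inCbar hBc hB'c hV₀W hA₁c hA₂c hB'rels hA₂rels hBfin hA₁fin hB hA₁ hss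
  have hss' := swap_ss hB'c hA₁c hB'rels hA₂rels hBfin hA₁fin hBc hss
  have hB'fin : B'.rels.Finite := by
    rw [hB'rels]
    exact (hBfin.subset Set.diff_subset).union
      (hA₁fin)
  have hA₂fin : A₂.rels.Finite := by
    rw [hA₂rels]; exact hBfin.subset (relsIn_subset B _)
  have hrev : B.rels = (B'.rels \ A₁.rels) ∪ A₂.rels := swap_invol hA₁c hB'rels hA₂rels
  refine ⟨hrV₀, hB'incbar, hss', fun S hSW => le_antisymm ?_ ?_⟩
  · exact swap_dim_le hBc hB'c hV₀W hA₁c hA₂c hB'rels hA₂rels hBfin hA₁fin hB hA₁ hA₂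
      hss hdim hSW
  · exact swap_dim_le hB'c hBc hV₀W hA₂c hA₁c hrev hrV₀.symm hB'fin hA₂fin
      hB'incbar hA₂ hA₁ hss' (fun S hS => (hdim S hS).symm) hSW

end BigFS
-- free amalgamation
namespace BigFS
variable {I U : Type} {ar : I → ℕ}
variable {B₁ B₂ P : BigFS I ar U} {V₁ V₂ V₀ : Finset U}

lemma amalg_relsIn_left
    (hc₁ : B₁.carrier = ↑V₁) (hc₂ : B₂.carrier = ↑V₂) (hinter : V₁ ∩ V₂ = V₀)
    (hPrels : P.rels = B₁.rels ∪ B₂.rels)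
    (hcompat : B₁.relsIn ↑V₀ = B₂.relsIn ↑V₀) :
    P.relsIn ↑V₁ = B₁.rels := by
  ext r
  constructor
  · rintro ⟨hr, he⟩
    rw [hPrels] at hr
    rcases hr with h | h
    · exact h
    · have hV₀ : r ∈ B₂.relsIn ↑V₀ := by
        refine ⟨h, fun k => ?_⟩
        have h2 : r.2 k ∈ (↑V₂ : Set U) := hc₂ ▸ B₂.mem_carrier r h k
        have h1 : r.2 k ∈ (↑V₁ : Set U) := he k
        rw [← hinter, Finset.coe_inter]
        exact ⟨h1, h2⟩
      rw [← hcompat] at hV₀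
      exact hV₀.1
  · intro hr
    exact ⟨by rw [hPrels]; exact Or.inl hr, fun k => hc₁ ▸ B₁.mem_carrier r hr k⟩

lemma amalg_relsIn_right
    (hc₁ : B₁.carrier = ↑V₁) (hc₂ : B₂.carrier = ↑V₂) (hinter : V₁ ∩ V₂ = V₀)
    (hPrels : P.rels = B₁.rels ∪ B₂.rels)
    (hcompat : B₁.relsIn ↑V₀ = B₂.relsIn ↑V₀) :
    P.relsIn ↑V₂ = B₂.rels := by
  have hinter' : V₂ ∩ V₁ = V₀ := by rw [Finset.inter_comm]; exact hinter
  have hPrels' : P.rels = B₂.rels ∪ B₁.rels := by rw [hPrels, Set.union_comm]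
  exact amalg_relsIn_left hc₂ hc₁ hinter' hPrels' hcompat.symm

lemma amalg_decomp
    (hc₁ : B₁.carrier = ↑V₁) (hc₂ : B₂.carrier = ↑V₂) (hinter : V₁ ∩ V₂ = V₀)
    (hPrels : P.rels = B₁.rels ∪ B₂.rels)
    (hcompat : B₁.relsIn ↑V₀ = B₂.relsIn ↑V₀) (T : Finset U) :
    P.relsIn ↑T = B₁.relsIn ↑(T ∩ V₁) ∪ B₂.relsIn ↑(T ∩ V₂) ∧
    B₁.relsIn ↑(T ∩ V₁) ∩ B₂.relsIn ↑(T ∩ V₂) = B₁.relsIn ↑(T ∩ V₀) := by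
  constructor
  · ext r
    constructor
    · rintro ⟨hr, he⟩
      rw [hPrels] at hr
      rcases hr with h | h
      · refine Or.inl ⟨h, fun k => ?_⟩
        rw [Finset.coe_inter]
        exact ⟨he k, hc₁ ▸ B₁.mem_carrier r h k⟩
      · refine Or.inr ⟨h, fun k => ?_⟩
        rw [Finset.coe_inter]
        exact ⟨he k, hc₂ ▸ B₂.mem_carrier r h k⟩
    · rintro (⟨hr, he⟩ | ⟨hr, he⟩)
      · refine ⟨by rw [hPrels]; exact Or.inl hr, fun k => ?_⟩
        have := he k; rw [Finset.coe_inter] at this; exact this.1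
      · refine ⟨by rw [hPrels]; exact Or.inr hr, fun k => ?_⟩
        have := he k; rw [Finset.coe_inter] at this; exact this.1
  · ext r
    constructor
    · rintro ⟨⟨hr1, he1⟩, ⟨hr2, he2⟩⟩
      refine ⟨hr1, fun k => ?_⟩
      have h1 := he1 k; rw [Finset.coe_inter] at h1
      have h2 := he2 k; rw [Finset.coe_inter] at h2
      rw [Finset.coe_inter]
      refine ⟨h1.1, ?_⟩
      rw [← hinter, Finset.coe_inter]
      exact ⟨h1.2, h2.2⟩
    · rintro ⟨hr, he⟩
      have heV₀ : ∀ k, r.2 k ∈ (↑V₀ : Set U) := fun k => by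
        have := he k; rw [Finset.coe_inter] at this; exact this.2
      have heT : ∀ k, r.2 k ∈ (↑T : Set U) := fun k => by
        have := he k; rw [Finset.coe_inter] at this; exact this.1
      have hr2 : r ∈ B₂.rels := by
        have : r ∈ B₂.relsIn ↑V₀ := by rw [← hcompat]; exact ⟨hr, heV₀⟩
        exact this.1
      have hV₀₁ : (↑V₀ : Set U) ⊆ ↑V₁ := by
        rw [← hinter, Finset.coe_inter]; exact Set.inter_subset_left
      have hV₀₂ : (↑V₀ : Set U) ⊆ ↑V₂ := by
        rw [← hinter, Finset.coe_inter]; exact Set.inter_subset_right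
      constructor
      · exact ⟨hr, fun k => by rw [Finset.coe_inter]; exact ⟨heT k, hV₀₁ (heV₀ k)⟩⟩
      · exact ⟨hr2, fun k => by rw [Finset.coe_inter]; exact ⟨heT k, hV₀₂ (heV₀ k)⟩⟩

lemma amalg_bdelta
    (hc₁ : B₁.carrier = ↑V₁) (hc₂ : B₂.carrier = ↑V₂) (hinter : V₁ ∩ V₂ = V₀)
    (hPrels : P.rels = B₁.rels ∪ B₂.rels)
    (hcompat : B₁.relsIn ↑V₀ = B₂.relsIn ↑V₀)
    (hfin₁ : B₁.rels.Finite) (hfin₂ : B₂.rels.Finite)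
    {T : Finset U} (hT : T ⊆ V₁ ∪ V₂) :
    bdelta (fun _ => 1) P T = bdelta (fun _ => 1) B₁ (T ∩ V₁)
      + bdelta (fun _ => 1) B₂ (T ∩ V₂) - bdelta (fun _ => 1) B₁ (T ∩ V₀) := by
  obtain ⟨hdec, hint⟩ := amalg_decomp hc₁ hc₂ hinter hPrels hcompat T
  have f1 : (B₁.relsIn (↑(T ∩ V₁) : Set U)).Finite := hfin₁.subset (relsIn_subset _ _)
  have f2 : (B₂.relsIn (↑(T ∩ V₂) : Set U)).Finite := hfin₂.subset (relsIn_subset _ _)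
  have f0 : (B₁.relsIn (↑(T ∩ V₀) : Set U)).Finite := hfin₁.subset (relsIn_subset _ _)
  have fP : (P.relsIn (↑T : Set U)).Finite := by rw [hdec]; exact f1.union f2
  have hcards : T.card + (T ∩ V₀).card = (T ∩ V₁).card + (T ∩ V₂).card := by
    have hu : (T ∩ V₁) ∪ (T ∩ V₂) = T := by
      rw [← Finset.inter_union_distrib_left]
      exact Finset.inter_eq_left.mpr hT
    have hi : (T ∩ V₁) ∩ (T ∩ V₂) = T ∩ V₀ := by
      rw [← hinter]
      ext x
      simp only [Finset.mem_inter]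
      tauto
    have := Finset.card_union_add_card_inter (T ∩ V₁) (T ∩ V₂)
    rw [hu, hi] at this
    exact this
  have hncard : (P.relsIn (↑T : Set U)).ncard + (B₁.relsIn (↑(T ∩ V₀) : Set U)).ncard
      = (B₁.relsIn (↑(T ∩ V₁) : Set U)).ncard + (B₂.relsIn (↑(T ∩ V₂) : Set U)).ncard := by
    have := Set.ncard_union_add_ncard_inter (B₁.relsIn ↑(T ∩ V₁)) (B₂.relsIn ↑(T ∩ V₂)) f1 f2
    rw [hint, ← hdec] at this
    exact this
  rw [bdelta_eq_ncard _ _ fP, bdelta_eq_ncard _ _ f1, bdelta_eq_ncard _ _ f2,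
    bdelta_eq_ncard _ _ f0]
  omega

lemma amalg_all
    (hc₁ : B₁.carrier = ↑V₁) (hc₂ : B₂.carrier = ↑V₂)
    (hPc : P.carrier = ↑(V₁ ∪ V₂))
    (hV₀₁ : V₀ ⊆ V₁) (hV₀₂ : V₀ ⊆ V₂) (hinter : V₁ ∩ V₂ = V₀)
    (hPrels : P.rels = B₁.rels ∪ B₂.rels)
    (hcompat : B₁.relsIn ↑V₀ = B₂.relsIn ↑V₀)
    (hfin₁ : B₁.rels.Finite) (hfin₂ : B₂.rels.Finite)
    (h1 : inCbar (fun _ => 1) B₁) (h2 : inCbar (fun _ => 1) B₂)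
    (hss₁ : ∀ T : Finset U, ↑T ⊆ B₁.carrier →
      bdelta (fun _ => 1) B₁ (T ∩ V₀) ≤ bdelta (fun _ => 1) B₁ T)
    (hss₂ : ∀ T : Finset U, ↑T ⊆ B₂.carrier →
      bdelta (fun _ => 1) B₂ (T ∩ V₀) ≤ bdelta (fun _ => 1) B₂ T) :
    inCbar (fun _ => 1) P ∧
    (∀ T : Finset U, ↑T ⊆ P.carrier →
      bdelta (fun _ => 1) P (T ∩ V₁) ≤ bdelta (fun _ => 1) P T) ∧
    (∀ T : Finset U, ↑T ⊆ P.carrier →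
      bdelta (fun _ => 1) P (T ∩ V₂) ≤ bdelta (fun _ => 1) P T) := by
  -- finset identities
  have hi1 : ∀ T : Finset U, (T ∩ V₁) ∩ V₂ = T ∩ V₀ := by
    intro T; rw [← hinter]; ext x; simp only [Finset.mem_inter]; tauto
  have hi4 : ∀ T : Finset U, (T ∩ V₂) ∩ V₁ = T ∩ V₀ := by
    intro T; rw [← hinter]; ext x; simp only [Finset.mem_inter]; tauto
  have hi2 : ∀ T : Finset U, (T ∩ V₁) ∩ V₀ = T ∩ V₀ := by
    intro T; ext x; simp only [Finset.mem_inter]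
    exact ⟨fun h => ⟨h.1.1, h.2⟩, fun h => ⟨⟨h.1, hV₀₁ h.2⟩, h.2⟩⟩
  have hi3 : ∀ T : Finset U, (T ∩ V₂) ∩ V₀ = T ∩ V₀ := by
    intro T; ext x; simp only [Finset.mem_inter]
    exact ⟨fun h => ⟨h.1.1, h.2⟩, fun h => ⟨⟨h.1, hV₀₂ h.2⟩, h.2⟩⟩
  have hi5 : ∀ T : Finset U, (T ∩ V₁) ∩ V₁ = T ∩ V₁ := by
    intro T; rw [Finset.inter_assoc, Finset.inter_self]
  have hi6 : ∀ T : Finset U, (T ∩ V₂) ∩ V₂ = T ∩ V₂ := by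
    intro T; rw [Finset.inter_assoc, Finset.inter_self]
  have hbd := fun {T} hT => amalg_bdelta hc₁ hc₂ hinter hPrels hcompat hfin₁ hfin₂
    (T := T) hT
  have hrelscmp : ∀ S : Set U, S ⊆ ↑V₀ → B₁.relsIn S = B₂.relsIn S := by
    intro S hS
    ext r
    constructor
    · rintro ⟨hr, he⟩
      have hmem : r ∈ B₁.relsIn ↑V₀ := ⟨hr, fun k => hS (he k)⟩
      rw [hcompat] at hmem
      exact ⟨hmem.1, he⟩
    · rintro ⟨hr, he⟩
      have hmem : r ∈ B₂.relsIn ↑V₀ := ⟨hr, fun k => hS (he k)⟩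
      rw [← hcompat] at hmem
      exact ⟨hmem.1, he⟩
  have hcmp : ∀ T : Finset U, T ⊆ V₀ →
      bdelta (fun _ => 1) B₂ T = bdelta (fun _ => 1) B₁ T := by
    intro T hTV₀
    exact (bdelta_congr _ ((hrelscmp ↑T (by exact_mod_cast Finset.coe_subset.mpr hTV₀)))).symm
  have hsub1 : ∀ T : Finset U, (↑(T ∩ V₁) : Set U) ⊆ B₁.carrier := by
    intro T; rw [hc₁, Finset.coe_inter]; exact Set.inter_subset_right
  have hsub2 : ∀ T : Finset U, (↑(T ∩ V₂) : Set U) ⊆ B₂.carrier := by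
    intro T; rw [hc₂, Finset.coe_inter]; exact Set.inter_subset_right
  have hPs : ∀ T : Finset U, ↑T ⊆ P.carrier → T ⊆ V₁ ∪ V₂ := by
    intro T hT
    rw [hPc] at hT
    exact_mod_cast hT
  -- the δ identity on the two sides
  have hside1 : ∀ T : Finset U, T ⊆ V₁ ∪ V₂ →
      bdelta (fun _ => 1) P (T ∩ V₁) = bdelta (fun _ => 1) B₁ (T ∩ V₁) := by
    intro T hT
    have hT' : T ∩ V₁ ⊆ V₁ ∪ V₂ := (Finset.inter_subset_left).trans hT
    have := hbd hT'
    rw [hi5 T, hi1 T, hi2 T, hcmp (T ∩ V₀) Finset.inter_subset_right] at this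
    linarith
  have hside2 : ∀ T : Finset U, T ⊆ V₁ ∪ V₂ →
      bdelta (fun _ => 1) P (T ∩ V₂) = bdelta (fun _ => 1) B₂ (T ∩ V₂) := by
    intro T hT
    have hT' : T ∩ V₂ ⊆ V₁ ∪ V₂ := (Finset.inter_subset_left).trans hT
    have := hbd hT'
    rw [hi6 T, hi4 T, hi3 T] at this
    linarith
  refine ⟨?_, ?_, ?_⟩
  · -- inCbar
    intro T hT
    have hTsub := hPs T hT
    constructor
    · refine (hfin₁.union hfin₂).subset ?_
      rw [← hPrels]
      exact relsIn_subset P _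
    · rw [hbd hTsub]
      have e1 := hss₁ (T ∩ V₁) (hsub1 T)
      rw [hi2 T] at e1
      have e2 := (h2 (T ∩ V₂) (hsub2 T)).2
      linarith
  · -- ss V₁
    intro T hT
    have hTsub := hPs T hT
    rw [hside1 T hTsub, hbd hTsub]
    have e3 := hss₂ (T ∩ V₂) (hsub2 T)
    rw [hi3 T, hcmp (T ∩ V₀) Finset.inter_subset_right] at e3
    linarith
  · -- ss V₂
    intro T hT
    have hTsub := hPs T hT
    rw [hside2 T hTsub, hbd hTsub]
    have e3 := hss₁ (T ∩ V₁) (hsub1 T)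
    rw [hi2 T] at e3
    linarith

end BigFS

/-- `(V, dV) ∈ P_n`: the finite pregeometry with carrier `V` and dimension `dV`
is `PG(A)` for some `A ∈ 𝒞_n`. -/
def IsPGn {U : Type} (n : ℕ) (V : Finset U) (dV : Finset U → ℤ) : Prop :=
  ∃ A : BigFS PUnit (fun _ => n) U, A.carrier.Finite ∧ inCbar (fun _ => 1) A ∧
    A.carrier = ↑V ∧ ∀ S : Finset U, S ⊆ V → dim (fun _ => 1) A S = dV S

/-- `(V, dW|_V) ⊴_n (W, dW)`: there are lifts `Ã ≤_n B̃` in `𝒞_n` with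
`PG(B̃) = (W, dW)` and `Ã` the induced substructure of `B̃` on `V`. -/
def SubPGn {U : Type} (n : ℕ) (V W : Finset U) (dW : Finset U → ℤ) : Prop :=
  V ⊆ W ∧ ∃ A B : BigFS PUnit (fun _ => n) U,
    A.carrier.Finite ∧ B.carrier.Finite ∧
    inCbar (fun _ => 1) A ∧ inCbar (fun _ => 1) B ∧
    A.carrier = ↑V ∧ B.carrier = ↑W ∧ A.rels = B.relsIn ↑V ∧
    ssSet (fun _ => 1) B ↑V ∧
    ∀ S : Finset U, S ⊆ W → dim (fun _ => 1) B S = dW S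

/-- the class `(P_n, ⊴_n)` of finite pregeometries has the
amalgamation property: if `A₀ ⊴_n A₁ ∈ P_n` and `A₀ ⊴_n A₂ ∈ P_n` then there are
`P ∈ P_n` and embeddings of pregeometries `f₁, f₂` of `A₁, A₂` into `P`, agreeing
on `A₀`, with `f_i(A_i) ⊴_n P`. -/
theorem Pn_amalgamation {U : Type} [Infinite U] (n : ℕ) (hn : 1 ≤ n)
    (V₀ V₁ V₂ : Finset U) (d₁ d₂ : Finset U → ℤ)
    (h01 : SubPGn n V₀ V₁ d₁) (h02 : SubPGn n V₀ V₂ d₂)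
    (hagree : ∀ S : Finset U, S ⊆ V₀ → d₁ S = d₂ S) :
    ∃ (VP : Finset U) (dP : Finset U → ℤ) (f₁ f₂ : U → U),
      IsPGn n VP dP ∧
      Set.InjOn f₁ ↑V₁ ∧ Set.InjOn f₂ ↑V₂ ∧
      (∀ a ∈ V₀, f₁ a = f₂ a) ∧
      (∀ S : Finset U, S ⊆ V₁ → dP (S.image f₁) = d₁ S) ∧
      (∀ S : Finset U, S ⊆ V₂ → dP (S.image f₂) = d₂ S) ∧
      SubPGn n (V₁.image f₁) VP dP ∧ SubPGn n (V₂.image f₂) VP dP := by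
  obtain ⟨hV01, _, B₁, _, _, _, hB1in, _, hB1c, _, hssB1set, hdimB1⟩ := h01
  obtain ⟨hV02, _, B₂, _, _, _, hB2in, _, hB2c, _, hssB2set, hdimB2⟩ := h02
  have hB1rels : B₁.rels.Finite := rels_finite hB1c hB1in
  have hB2rels : B₂.rels.Finite := rels_finite hB2c hB2in
  have hss₁ : ∀ T : Finset U, ↑T ⊆ B₁.carrier →
      bdelta (fun _ => 1) B₁ (T ∩ V₀) ≤ bdelta (fun _ => 1) B₁ T := by
    intro T hT
    have := hssB1set.2 T hT
    rwa [filter_coe_eq_inter] at this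
  have hss₂ : ∀ T : Finset U, ↑T ⊆ B₂.carrier →
      bdelta (fun _ => 1) B₂ (T ∩ V₀) ≤ bdelta (fun _ => 1) B₂ T := by
    intro T hT
    have := hssB2set.2 T hT
    rwa [filter_coe_eq_inter] at this
  -- fresh points and the map f₂
  obtain ⟨Vf, hVfsub, hVfcard⟩ :=
    ((V₁ ∪ V₂).finite_toSet.infinite_compl).exists_subset_card_eq (V₂ \ V₀).card
  have hcard : (V₂ \ V₀).card = Vf.card := hVfcard.symm
  set e := Finset.equivOfCardEq hcard with he
  set f₂ : U → U := fun x => if hx : x ∈ V₂ \ V₀ then (e ⟨x, hx⟩ : U) else x with hf₂def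
  have hVfout : ∀ z ∈ Vf, z ∉ V₁ ∧ z ∉ V₂ := by
    intro z hz
    have : z ∉ V₁ ∪ V₂ := by
      intro hmem
      exact hVfsub (by exact_mod_cast hz) (by exact_mod_cast hmem)
    exact ⟨fun h => this (Finset.mem_union_left _ h), fun h => this (Finset.mem_union_right _ h)⟩
  have hfid : ∀ x, x ∉ V₂ \ V₀ → f₂ x = x := by
    intro x hx; rw [hf₂def]; exact dif_neg hx
  have hfVf : ∀ x (hx : x ∈ V₂ \ V₀), f₂ x ∈ Vf := by
    intro x hx
    rw [hf₂def]
    simp only [dif_pos hx]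
    exact Finset.coe_mem _
  have hfV₀ : ∀ x ∈ V₀, f₂ x = x := fun x hx =>
    hfid x (fun h => (Finset.mem_sdiff.mp h).2 hx)
  have hinj : Set.InjOn f₂ ↑V₂ := by
    intro x hx y hy hxy
    have hx2 : x ∈ V₂ := by exact_mod_cast hx
    have hy2 : y ∈ V₂ := by exact_mod_cast hy
    by_cases hx' : x ∈ V₂ \ V₀ <;> by_cases hy' : y ∈ V₂ \ V₀
    · have h1 : ((e ⟨x, hx'⟩ : {z // z ∈ Vf}) : U) = ((e ⟨y, hy'⟩ : {z // z ∈ Vf}) : U) := by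
        rw [hf₂def] at hxy
        simpa only [dif_pos hx', dif_pos hy'] using hxy
      have := e.injective (Subtype.ext h1)
      exact congrArg Subtype.val this
    · exfalso
      have h1 : f₂ x ∈ Vf := hfVf x hx'
      rw [hxy, hfid y hy'] at h1
      exact (hVfout y h1).2 hy2
    · exfalso
      have h1 : f₂ y ∈ Vf := hfVf y hy'
      rw [← hxy, hfid x hx'] at h1
      exact (hVfout x h1).2 hx2
    · rw [hfid x hx', hfid y hy'] at hxy; exact hxy
  set V₂t := V₂.image f₂ with hV₂t
  have hV₀V₂t : V₀ ⊆ V₂t := by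
    intro x hx
    rw [hV₂t]
    rw [← hfV₀ x hx]
    exact Finset.mem_image_of_mem f₂ (hV02 hx)
  have hout : ∀ x ∈ V₂, f₂ x ∈ V₀ → x ∈ V₀ := by
    intro x hx hfx
    by_cases hx' : x ∈ V₂ \ V₀
    · exfalso
      have := hfVf x hx'
      exact (hVfout _ this).1 (hV01 hfx)
    · rwa [hfid x hx'] at hfx
  have hV₁inter : V₁ ∩ V₂t = V₀ := by
    apply Finset.Subset.antisymm
    · intro x hx
      obtain ⟨hx1, hx2⟩ := Finset.mem_inter.mp hx
      obtain ⟨y, hy, rfl⟩ := Finset.mem_image.mp hx2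
      by_cases hy' : y ∈ V₂ \ V₀
      · exact absurd hx1 (hVfout _ (hfVf y hy')).1
      · have hyV₀ : y ∈ V₀ := by
          by_contra hv
          exact hy' (Finset.mem_sdiff.mpr ⟨hy, hv⟩)
        rwa [hfV₀ y hyV₀]
    · intro x hx
      exact Finset.mem_inter.mpr ⟨hV01 hx, hV₀V₂t hx⟩
  -- transported structure
  set B₂t := mapStr f₂ B₂ with hB₂t
  have hB2tc : B₂t.carrier = ↑V₂t := by
    rw [hB₂t, hV₂t]
    show f₂ '' B₂.carrier = ↑(V₂.image f₂)
    rw [hB2c, Finset.coe_image]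
  have hB2tfin : B₂t.rels.Finite := hB2rels.image _
  have hB2tin : inCbar (fun _ => 1) B₂t := mapStr_inCbar hB2c hinj hB2rels hB2in
  have hsst : ∀ T : Finset U, ↑T ⊆ B₂t.carrier →
      bdelta (fun _ => 1) B₂t (T ∩ V₀) ≤ bdelta (fun _ => 1) B₂t T :=
    mapStr_ss hB2c hinj hB2rels hV02 hfV₀ hout hss₂
  have hdimt : ∀ S : Finset U, S ⊆ V₂ →
      dim (fun _ => 1) B₂t (S.image f₂) = d₂ S := by
    intro S hS
    rw [mapStr_dim hB2c hinj hB2rels hS]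
    exact hdimB2 S hS
  -- the two structures on V₀
  set A₁s : BigFS PUnit (fun _ => n) U :=
    ⟨(↑V₀ : Set U), B₁.relsIn ↑V₀, fun r hr k => hr.2 k⟩ with hA₁s
  set A₂s : BigFS PUnit (fun _ => n) U :=
    ⟨(↑V₀ : Set U), B₂t.relsIn ↑V₀, fun r hr k => hr.2 k⟩ with hA₂s
  have hV₀B₁ : (↑V₀ : Set U) ⊆ B₁.carrier := by
    rw [hB1c]; exact_mod_cast hV01
  have hV₀B₂t : (↑V₀ : Set U) ⊆ B₂t.carrier := by
    rw [hB2tc]; exact_mod_cast hV₀V₂t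
  have hA₁in : inCbar (fun _ => 1) A₁s := inCbar_induced rfl hV₀B₁ rfl hB1in
  have hA₂in : inCbar (fun _ => 1) A₂s := inCbar_induced rfl hV₀B₂t rfl hB2tin
  have hA₁fin : A₁s.rels.Finite := hB1rels.subset (relsIn_subset _ _)
  have hdimA₁ : ∀ S : Finset U, S ⊆ V₀ → dim (fun _ => 1) A₁s S = d₁ S := by
    intro S hS
    rw [← dim_transfer rfl hV₀B₁ rfl hB1in hss₁ hS]
    exact hdimB1 S (hS.trans hV01)
  have hdimA₂ : ∀ S : Finset U, S ⊆ V₀ → dim (fun _ => 1) A₂s S = d₂ S := by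
    intro S hS
    rw [← dim_transfer rfl hV₀B₂t rfl hB2tin hsst hS]
    have himS : S.image f₂ = S := by
      rw [Finset.image_congr (g := id) (fun x hx => hfV₀ x (hS hx)), Finset.image_id]
    have := hdimt S (hS.trans hV02)
    rwa [himS] at this
  have hdimA : ∀ S : Finset U, S ⊆ V₀ →
      dim (fun _ => 1) A₁s S = dim (fun _ => 1) A₂s S := by
    intro S hS
    rw [hdimA₁ S hS, hdimA₂ S hS]
    exact hagree S hS
  -- the swap
  set B₂' : BigFS PUnit (fun _ => n) U :=
    ⟨(↑V₂t : Set U), (B₂t.rels \ A₂s.rels) ∪ A₁s.rels, by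
      rintro r (⟨h, _⟩ | h) k
      · have := B₂t.mem_carrier r h k
        rwa [hB2tc] at this
      · have : r.2 k ∈ (↑V₀ : Set U) := h.2 k
        exact_mod_cast hV₀V₂t (by exact_mod_cast this)⟩ with hB₂'
  obtain ⟨hswrels, hB₂'in, hss₂', hdimsw⟩ :=
    swap_full (B := B₂t) (B' := B₂') (A₁ := A₁s) (A₂ := A₂s) (W := V₂t) (V₀ := V₀)
      hB2tc rfl hV₀V₂t rfl rfl rfl rfl hB2tfin hA₁fin hB2tin hA₁in hA₂in hsst hdimA
  have hB₂'fin : B₂'.rels.Finite := (hB2tfin.subset Set.diff_subset).union hA₁fin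
  have hcompat : B₁.relsIn ↑V₀ = B₂'.relsIn ↑V₀ := hswrels.symm
  -- the amalgam
  set P : BigFS PUnit (fun _ => n) U :=
    ⟨(↑(V₁ ∪ V₂t) : Set U), B₁.rels ∪ B₂'.rels, by
      rintro r (h | h) k
      · rw [Finset.coe_union]
        exact Or.inl (by rw [← hB1c]; exact B₁.mem_carrier r h k)
      · rw [Finset.coe_union]
        exact Or.inr (B₂'.mem_carrier r h k)⟩ with hP
  obtain ⟨hPin, hPss₁, hPss₂⟩ :=
    amalg_all (B₁ := B₁) (B₂ := B₂') (P := P) (V₁ := V₁) (V₂ := V₂t) (V₀ := V₀)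
      hB1c rfl rfl hV01 hV₀V₂t hV₁inter rfl hcompat hB1rels hB₂'fin hB1in hB₂'in
      hss₁ hss₂'
  have hPr₁ : P.relsIn ↑V₁ = B₁.rels :=
    amalg_relsIn_left hB1c rfl hV₁inter rfl hcompat
  have hPr₂ : P.relsIn ↑V₂t = B₂'.rels :=
    amalg_relsIn_right hB1c rfl hV₁inter rfl hcompat
  have hV₁P : (↑V₁ : Set U) ⊆ P.carrier := by
    show (↑V₁ : Set U) ⊆ ↑(V₁ ∪ V₂t)
    exact_mod_cast Finset.subset_union_left
  have hV₂tP : (↑V₂t : Set U) ⊆ P.carrier := by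
    show (↑V₂t : Set U) ⊆ ↑(V₁ ∪ V₂t)
    exact_mod_cast Finset.subset_union_right
  have hdimP₁ : ∀ S : Finset U, S ⊆ V₁ →
      dim (fun _ => 1) P S = dim (fun _ => 1) B₁ S := fun S hS =>
    dim_transfer hB1c hV₁P hPr₁.symm hPin hPss₁ hS
  have hdimP₂ : ∀ S : Finset U, S ⊆ V₂t →
      dim (fun _ => 1) P S = dim (fun _ => 1) B₂' S := fun S hS =>
    dim_transfer rfl hV₂tP hPr₂.symm hPin hPss₂ hS
  -- assembling the answer
  refine ⟨V₁ ∪ V₂t, fun S => dim (fun _ => 1) P S, id, f₂, ?_, ?_, hinj, ?_, ?_, ?_, ?_, ?_⟩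
  · exact ⟨P, Finset.finite_toSet _, hPin, rfl, fun S _ => rfl⟩
  · exact Function.injective_id.injOn
  · exact fun a ha => (hfV₀ a ha).symm
  · intro S hS
    show dim (fun _ => 1) P (S.image id) = d₁ S
    rw [Finset.image_id, hdimP₁ S hS]
    exact hdimB1 S hS
  · intro S hS
    show dim (fun _ => 1) P (S.image f₂) = d₂ S
    have hSim : S.image f₂ ⊆ V₂t := Finset.image_subset_image hS
    rw [hdimP₂ _ hSim, hdimsw _ hSim]
    exact hdimt S hS
  · rw [Finset.image_id]
    refine ⟨Finset.subset_union_left, B₁, P, ?_, Finset.finite_toSet _, hB1in, hPin,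
      hB1c, rfl, hPr₁.symm, ⟨hV₁P, ?_⟩, fun S _ => rfl⟩
    · rw [hB1c]; exact Finset.finite_toSet _
    · intro T hT
      rw [filter_coe_eq_inter]
      exact hPss₁ T hT
  · refine ⟨Finset.subset_union_right, B₂', P, Finset.finite_toSet _,
      Finset.finite_toSet _, hB₂'in, hPin, rfl, rfl, hPr₂.symm, ⟨hV₂tP, ?_⟩,
      fun S _ => rfl⟩
    intro T hT
    rw [filter_coe_eq_inter]
    exact hPss₂ T hT
end
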